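/- arXiv:2212.06621 — 6 statements merged into one kernel-verified Lean document; each statement's English description precedes it below -/
import Mathlib

section
/- With G_n as in the context: assume that G_{3r} contains no induced 2K_2 (i.e., indmatch(G_{3r}) = 1) and that there exists (i,j) ∈ E with j − i = 1. Then for every integer n ≥ max{5r, 2r(r−2)}, the graph G_n is cochordal. (By Fröberg's theorem, this yields reg I_n = 2 for all such n.) -/
/-- Adjacency in the graph `G_n` of the chain. -/
def adjGraph (r n : ℤ) (E : Set (ℤ × ℤ)) (u v : ℤ) : Prop :=
  (u < v ∧ ∃ e ∈ E, e.1 ≤ u ∧ u - e.1 ≤ v - e.2 ∧ v - e.2 ≤ n - r) ∨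
  (v < u ∧ ∃ e ∈ E, e.1 ≤ v ∧ v - e.1 ≤ u - e.2 ∧ u - e.2 ≤ n - r)

/-- The graph with adjacency relation `A` contains an induced `kK₂`. -/
def HasInducedKK2 (A : ℤ → ℤ → Prop) (k : ℕ) : Prop :=
  ∃ u v : ℕ → ℤ,
    (∀ s, s < k → ∀ t, t < k → (s ≠ t → u s ≠ u t ∧ v s ≠ v t) ∧ u s ≠ v t) ∧
    (∀ t, t < k → A (u t) (v t)) ∧
    (∀ s, s < k → ∀ t, t < k → s ≠ t →
      ¬ A (u s) (u t) ∧ ¬ A (u s) (v t) ∧ ¬ A (v s) (v t))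

/-- `a 0, a 1, …, a (m-1)` is an induced anticycle of length `m` in this
cyclic order. -/
def IsInducedAnticycle (A : ℤ → ℤ → Prop) (m : ℕ) (a : ℕ → ℤ) : Prop :=
  (∀ s, s < m → ∀ t, t < m → s ≠ t → a s ≠ a t) ∧
  (∀ t, t < m → ¬ A (a t) (a ((t + 1) % m))) ∧
  (∀ s, s < m → ∀ t, t < m → s ≠ t → (s + 1) % m ≠ t → (t + 1) % m ≠ s →
    A (a s) (a t))

/-- A graph is cochordal if it has no induced anticycle of length `≥ 4`. -/
def Cochordal (A : ℤ → ℤ → Prop) : Prop :=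
  ∀ m : ℕ, 4 ≤ m → ∀ a : ℕ → ℤ, ¬ IsInducedAnticycle A m a

section Stmt11Helpers

lemma find_switch (g : ℕ → Prop) : ∀ L : ℕ, ¬ g 0 → g L → ∃ l, l < L ∧ ¬ g l ∧ g (l + 1) := by
  intro L
  induction L with
  | zero => intro h0 hL; exact absurd hL h0
  | succ L ih =>
    intro h0 hL
    by_cases hgl : g L
    · obtain ⟨l, hl, h⟩ := ih h0 hgl
      exact ⟨l, by omega, h⟩
    · exact ⟨L, by omega, hgl, hL⟩

lemma addmod (m x d : ℕ) : (x % m + d) % m = (x + d) % m := by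
  conv_lhs => rw [Nat.add_mod]
  conv_rhs => rw [Nat.add_mod]
  rw [Nat.mod_mod_of_dvd _ dvd_rfl]

lemma addmod' (m x d : ℕ) : (x + d % m) % m = (x + d) % m := by
  conv_lhs => rw [Nat.add_mod]
  conv_rhs => rw [Nat.add_mod]
  rw [Nat.mod_mod_of_dvd _ dvd_rfl]

lemma modinj {m k d1 d2 : ℕ} (h1 : d1 < m) (h2 : d2 < m)
    (h : (k + d1) % m = (k + d2) % m) : d1 = d2 := by
  have h' : (k + d1) ≡ (k + d2) [MOD m] := h
  have h'' : d1 ≡ d2 [MOD m] := Nat.ModEq.add_left_cancel' k h'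
  have h3 : d1 % m = d2 % m := h''
  rw [Nat.mod_eq_of_lt h1, Nat.mod_eq_of_lt h2] at h3
  exact h3

variable {r n : ℤ} {E : Set (ℤ × ℤ)}

lemma ag_symm {u v : ℤ} (h : adjGraph r n E u v) : adjGraph r n E v u := by
  rcases h with h | h
  · exact Or.inr h
  · exact Or.inl h

lemma ag_elim {u v : ℤ} (h : adjGraph r n E u v) (hlt : u < v) :
    ∃ p ∈ E, p.1 ≤ u ∧ u - p.1 ≤ v - p.2 ∧ v - p.2 ≤ n - r := by
  rcases h with ⟨_, p, hp, h⟩ | ⟨h1, _⟩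
  · exact ⟨p, hp, h⟩
  · exact absurd hlt (lt_asymm h1)

lemma ag_intro {u v : ℤ} (p : ℤ × ℤ) (hp : p ∈ E) (hlt : u < v)
    (h1 : p.1 ≤ u) (h2 : u - p.1 ≤ v - p.2) (h3 : v - p.2 ≤ n - r) :
    adjGraph r n E u v := Or.inl ⟨hlt, p, hp, h1, h2, h3⟩

/-- cross non-edge: bottom endpoint is `≤ r-1`. -/
lemma nonedge_cross (hEr : ∀ e ∈ E, 1 ≤ e.1 ∧ e.1 < e.2 ∧ e.2 ≤ r)
    (hr : 1 ≤ r) (hn5 : 5 * r ≤ n) {u v : ℤ}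
    (hu : u ≤ 2 * r - 2) (hv : n - 2 * r + 2 ≤ v)
    (hne : ¬ adjGraph r n E u v) (hhi : ∃ p ∈ E, v ≤ n - r + p.2) :
    u ≤ r - 1 ∧ ∀ p ∈ E, p.1 ≤ u → n - r + p.2 < v := by
  have hlt : u < v := by omega
  constructor
  · by_contra hcon
    push_neg at hcon
    obtain ⟨p, hp, h2⟩ := hhi
    obtain ⟨he1, he2, he3⟩ := hEr p hp
    exact hne (ag_intro p hp hlt (by omega) (by omega) (by omega))
  · intro p hp h1
    by_contra hcon
    push_neg at hcon
    obtain ⟨he1, he2, he3⟩ := hEr p hp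
    exact hne (ag_intro p hp hlt h1 (by omega) (by omega))

/-- typing of anticycle vertices. -/
lemma typing_val (hEr : ∀ e ∈ E, 1 ≤ e.1 ∧ e.1 < e.2 ∧ e.2 ≤ r)
    (hr : 1 ≤ r) (hn5 : 5 * r ≤ n)
    (hcc : ∃ q ∈ E, q.2 = q.1 + 1) {x y : ℤ}
    (hxy : x ≠ y) (hne : ¬ adjGraph r n E x y)
    (hloy : ∃ p ∈ E, p.1 ≤ y) (hhiy : ∃ p ∈ E, y ≤ n - r + p.2) :
    x ≤ 2 * r - 2 ∨ n - 2 * r + 2 ≤ x := by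
  obtain ⟨q, hq, hq2⟩ := hcc
  obtain ⟨hqe1, hqe2, hqe3⟩ := hEr q hq
  by_contra hcon
  push_neg at hcon
  obtain ⟨hx1, hx2⟩ := hcon
  rcases lt_or_gt_of_ne hxy with hlt | hlt
  · -- x < y
    have hne' : ¬ adjGraph r n E x y := hne
    rcases le_or_gt y (n - r + 2) with hy | hy
    · have hf : ¬ (q.1 ≤ x ∧ x - q.1 ≤ y - q.2 ∧ y - q.2 ≤ n - r) :=
        fun hh => hne (ag_intro q hq hlt hh.1 hh.2.1 hh.2.2)
      omega
    · obtain ⟨p, hp, hpy⟩ := hhiy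
      obtain ⟨hpe1, hpe2, hpe3⟩ := hEr p hp
      have hf : ¬ (p.1 ≤ x ∧ x - p.1 ≤ y - p.2 ∧ y - p.2 ≤ n - r) :=
        fun hh => hne (ag_intro p hp hlt hh.1 hh.2.1 hh.2.2)
      omega
  · -- y < x
    have hne' : ¬ adjGraph r n E y x := fun h => hne (ag_symm h)
    obtain ⟨p, hp, hpy⟩ := hloy
    obtain ⟨hpe1, hpe2, hpe3⟩ := hEr p hp
    have hf1 : ¬ (p.1 ≤ y ∧ y - p.1 ≤ x - p.2 ∧ x - p.2 ≤ n - r) :=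
      fun hh => hne' (ag_intro p hp hlt hh.1 hh.2.1 hh.2.2)
    have hf2 : ¬ (q.1 ≤ y ∧ y - q.1 ≤ x - q.2 ∧ x - q.2 ≤ n - r) :=
      fun hh => hne' (ag_intro q hq hlt hh.1 hh.2.1 hh.2.2)
    omega


lemma seg_cross {m : ℕ} {a : ℕ → ℤ} (hm5 : 5 ≤ m)
    (htype : ∀ t, t < m → a t ≤ 2 * r - 2 ∨ n - 2 * r + 2 ≤ a t)
    (hsep : 2 * r - 2 < n - 2 * r + 2)
    (k : ℕ)
    (hd : (a ((k + 2) % m) ≤ 2 * r - 2 ∧ n - 2 * r + 2 ≤ a ((k + (m - 1)) % m)) ∨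
          (a ((k + (m - 1)) % m) ≤ 2 * r - 2 ∧ n - 2 * r + 2 ≤ a ((k + 2) % m))) :
    ∃ l, l + 4 ≤ m ∧
      ((a ((k + (2 + l)) % m) ≤ 2 * r - 2 ∧ n - 2 * r + 2 ≤ a ((k + (3 + l)) % m)) ∨
       (n - 2 * r + 2 ≤ a ((k + (2 + l)) % m) ∧ a ((k + (3 + l)) % m) ≤ 2 * r - 2)) := by
  have hm0 : 0 < m := by omega
  have hmlt : ∀ x : ℕ, x % m < m := fun x => Nat.mod_lt x hm0
  rcases hd with ⟨h0, hL⟩ | ⟨hL, h0⟩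
  · obtain ⟨l, hl, hgl, hgl1⟩ :=
      find_switch (fun j => n - 2 * r + 2 ≤ a ((k + (2 + j)) % m)) (m - 3)
        (by
          show ¬ (n - 2 * r + 2 ≤ a ((k + (2 + 0)) % m))
          have e : k + (2 + 0) = k + 2 := by omega
          rw [e]; omega)
        (by
          show n - 2 * r + 2 ≤ a ((k + (2 + (m - 3))) % m)
          have e : k + (2 + (m - 3)) = k + (m - 1) := by omega
          rw [e]; exact hL)
    refine ⟨l, by omega, Or.inl ⟨?_, ?_⟩⟩
    · rcases htype ((k + (2 + l)) % m) (hmlt _) with h | h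
      · exact h
      · exact absurd h hgl
    · have e : k + (2 + (l + 1)) = k + (3 + l) := by omega
      rw [e] at hgl1
      exact hgl1
  · obtain ⟨l, hl, hgl, hgl1⟩ :=
      find_switch (fun j => a ((k + (2 + j)) % m) ≤ 2 * r - 2) (m - 3)
        (by
          show ¬ (a ((k + (2 + 0)) % m) ≤ 2 * r - 2)
          have e : k + (2 + 0) = k + 2 := by omega
          rw [e]; omega)
        (by
          show a ((k + (2 + (m - 3))) % m) ≤ 2 * r - 2
          have e : k + (2 + (m - 3)) = k + (m - 1) := by omega
          rw [e]; exact hL)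
    refine ⟨l, by omega, Or.inr ⟨?_, ?_⟩⟩
    · rcases htype ((k + (2 + l)) % m) (hmlt _) with h | h
      · exact absurd h hgl
      · exact h
    · have e : k + (2 + (l + 1)) = k + (3 + l) := by omega
      rw [e] at hgl1
      exact hgl1


lemma transfer (hEr : ∀ e ∈ E, 1 ≤ e.1 ∧ e.1 < e.2 ∧ e.2 ≤ r)
    (hr : 1 ≤ r) (hn5 : 5 * r ≤ n)
    (h2 : ¬ HasInducedKK2 (adjGraph r (3 * r) E) 2)
    (P Q X Y : ℤ)
    (hP : P ≤ r - 1) (hQ : Q ≤ r - 1)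
    (hX : n - 2 * r + 2 ≤ X) (hY : n - 2 * r + 2 ≤ Y)
    (hPQ : P ≠ Q) (hXY : X ≠ Y)
    (ePQ : adjGraph r n E P Q) (eXY : adjGraph r n E X Y)
    (cPX : ∀ p ∈ E, p.1 ≤ P → n - r + p.2 < X)
    (cPY : ∀ p ∈ E, p.1 ≤ P → n - r + p.2 < Y)
    (cQX : ∀ p ∈ E, p.1 ≤ Q → n - r + p.2 < X)
    (cQY : ∀ p ∈ E, p.1 ≤ Q → n - r + p.2 < Y) : False := by
  have key : ∀ a b : ℤ, a ≤ r - 1 → n - 2 * r + 2 ≤ b →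
      (∀ p ∈ E, p.1 ≤ a → n - r + p.2 < b) →
      ¬ adjGraph r (3 * r) E a (b - (n - 3 * r)) := by
    intro a b ha hb hc h
    rcases h with ⟨hlt, p, hp, h1, h2', h3⟩ | ⟨hlt, p, hp, h1, h2', h3⟩
    · have := hc p hp h1
      obtain ⟨he1, he2, he3⟩ := hEr p hp
      omega
    · obtain ⟨he1, he2, he3⟩ := hEr p hp
      omega
  have key' : ∀ a b : ℤ, a ≤ r - 1 → n - 2 * r + 2 ≤ b →
      (∀ p ∈ E, p.1 ≤ a → n - r + p.2 < b) →
      ¬ adjGraph r (3 * r) E (b - (n - 3 * r)) a :=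
    fun a b ha hb hc h => key a b ha hb hc (ag_symm h)
  apply h2
  refine ⟨fun t => if t = 0 then P else X - (n - 3 * r),
          fun t => if t = 0 then Q else Y - (n - 3 * r), ?_, ?_, ?_⟩
  · intro s hs t ht
    have hs' : s = 0 ∨ s = 1 := by omega
    have ht' : t = 0 ∨ t = 1 := by omega
    rcases hs' with rfl | rfl <;> rcases ht' with rfl | rfl <;> simp <;>
      first
        | exact hPQ
        | exact hXY
        | exact ⟨⟨by omega, by omega⟩, by omega⟩
  · intro t ht
    have ht' : t = 0 ∨ t = 1 := by omega
    rcases ht' with rfl | rfl <;> simp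
    · rcases ePQ with ⟨hlt, p, hp, h1, h2', h3⟩ | ⟨hlt, p, hp, h1, h2', h3⟩
      · obtain ⟨he1, he2, he3⟩ := hEr p hp
        exact Or.inl ⟨hlt, p, hp, h1, h2', by omega⟩
      · obtain ⟨he1, he2, he3⟩ := hEr p hp
        exact Or.inr ⟨hlt, p, hp, h1, h2', by omega⟩
    · rcases eXY with ⟨hlt, p, hp, h1, h2', h3⟩ | ⟨hlt, p, hp, h1, h2', h3⟩
      · obtain ⟨he1, he2, he3⟩ := hEr p hp
        exact Or.inl ⟨by omega, p, hp, by omega, by omega, by omega⟩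
      · obtain ⟨he1, he2, he3⟩ := hEr p hp
        exact Or.inr ⟨by omega, p, hp, by omega, by omega, by omega⟩
  · intro s hs t ht hst
    have hs' : s = 0 ∨ s = 1 := by omega
    have ht' : t = 0 ∨ t = 1 := by omega
    rcases hs' with rfl | rfl <;> rcases ht' with rfl | rfl <;> simp at hst ⊢
    · exact ⟨key P X hP hX cPX, key P Y hP hY cPY, key Q Y hQ hY cQY⟩
    · exact ⟨key' P X hP hX cPX, key' Q X hQ hX cQX, key' Q Y hQ hY cQY⟩


/-- Core of mixed Case A. -/
lemma caseA_core (hEr : ∀ e ∈ E, 1 ≤ e.1 ∧ e.1 < e.2 ∧ e.2 ≤ r)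
    (hr : 1 ≤ r) (hn5 : 5 * r ≤ n)
    (h2K2 : ¬ HasInducedKK2 (adjGraph r (3 * r) E) 2)
    (P X oP oX : ℤ)
    (hPb : P ≤ 2 * r - 2) (hXt : n - 2 * r + 2 ≤ X)
    (hXhi : ∃ p ∈ E, X ≤ n - r + p.2)
    (hoPhi : ∃ p ∈ E, oP ≤ n - r + p.2)
    (htoP : oP ≤ 2 * r - 2 ∨ n - 2 * r + 2 ≤ oP)
    (htoX : oX ≤ 2 * r - 2 ∨ n - 2 * r + 2 ≤ oX)
    (hne1 : ¬ adjGraph r n E P X)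
    (hne2 : ¬ adjGraph r n E P oP)
    (hne3 : ¬ adjGraph r n E X oX)
    (hE1 : adjGraph r n E P oX)
    (hE2 : adjGraph r n E X oP)
    (hPmin2 : oP ≤ 2 * r - 2 → P < oP)
    (hPmin3 : oX ≤ 2 * r - 2 → P < oX)
    (hXmax2 : n - 2 * r + 2 ≤ oP → oP < X)
    (hXmax3 : n - 2 * r + 2 ≤ oX → oX < X)
    (hrest : ((oP ≤ 2 * r - 2 ∧ n - 2 * r + 2 ≤ oX) ∨
              (oX ≤ 2 * r - 2 ∧ n - 2 * r + 2 ≤ oP)) →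
      (¬ adjGraph r n E oP oX) ∨
      (∃ b x : ℤ, b ≤ 2 * r - 2 ∧ n - 2 * r + 2 ≤ x ∧
        ¬ adjGraph r n E b x ∧ (∃ p ∈ E, x ≤ n - r + p.2) ∧ P ≤ b ∧ x ≤ X ∧
        (adjGraph r n E P x ∨ x = oP) ∧ (adjGraph r n E X b ∨ b = oX) ∧
        ¬ (x = oP ∧ b = oX))) : False := by
  -- package flow, used in cases (iii) and (iv)
  have pkgflow : (∃ b x : ℤ, b ≤ 2 * r - 2 ∧ n - 2 * r + 2 ≤ x ∧
        ¬ adjGraph r n E b x ∧ (∃ p ∈ E, x ≤ n - r + p.2) ∧ P ≤ b ∧ x ≤ X ∧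
        (adjGraph r n E P x ∨ x = oP) ∧ (adjGraph r n E X b ∨ b = oX) ∧
        ¬ (x = oP ∧ b = oX)) →
      (oP ≤ 2 * r - 2 ∨ (n - 2 * r + 2 ≤ oP ∧ oX ≤ 2 * r - 2)) → False := by
    rintro ⟨b, x, hbb, hxt, hbx, hxhi, hPb', hxX, hd1, hd2, hd3⟩ hcase
    rcases hd1 with hPx | hxoP
    · -- A P x : contradiction with cross nonedge (b, x)
      obtain ⟨p, hp, h1, h2, h3⟩ := ag_elim hPx (by omega)
      obtain ⟨he1, he2, he3⟩ := hEr p hp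
      have hf : ¬ (p.1 ≤ b ∧ b - p.1 ≤ x - p.2 ∧ x - p.2 ≤ n - r) :=
        fun hh => hbx (ag_intro p hp (by omega) hh.1 hh.2.1 hh.2.2)
      omega
    · -- x = oP
      rcases hcase with hoPb | ⟨hoPt, hoXb⟩
      · omega
      · rcases hd2 with hXb | hboX
        · obtain ⟨q, hq, h1, h2, h3⟩ := ag_elim (ag_symm hXb) (by omega)
          obtain ⟨he1, he2, he3⟩ := hEr q hq
          have hf : ¬ (q.1 ≤ b ∧ b - q.1 ≤ x - q.2 ∧ x - q.2 ≤ n - r) :=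
            fun hh => hbx (ag_intro q hq (by omega) hh.1 hh.2.1 hh.2.2)
          omega
        · exact hd3 ⟨hxoP, hboX⟩
  rcases htoP with hoPb | hoPt
  · rcases htoX with hoXb | hoXt
    · -- (i) both Bot
      have h2' : P < oP := hPmin2 hoPb
      have h3' : P < oX := hPmin3 hoXb
      obtain ⟨p, hp, hp1, hp2, hp3⟩ := ag_elim hE1 h3'
      obtain ⟨hpe1, hpe2, hpe3⟩ := hEr p hp
      have hf1 : ¬ (p.1 ≤ P ∧ P - p.1 ≤ oP - p.2 ∧ oP - p.2 ≤ n - r) :=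
        fun hh => hne2 (ag_intro p hp h2' hh.1 hh.2.1 hh.2.2)
      have hoPoX : oP < oX := by omega
      have hne3' : ¬ adjGraph r n E oX X := fun h => hne3 (ag_symm h)
      obtain ⟨q, hq, hq1, hq2, hq3⟩ := ag_elim (ag_symm hE2) (by omega)
      obtain ⟨hqe1, hqe2, hqe3⟩ := hEr q hq
      have hf2 : ¬ (q.1 ≤ oX ∧ oX - q.1 ≤ X - q.2 ∧ X - q.2 ≤ n - r) :=
        fun hh => hne3' (ag_intro q hq (by omega) hh.1 hh.2.1 hh.2.2)
      omega
    · -- (iii) oP Bot, oX Top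
      rcases hrest (Or.inl ⟨hoPb, hoXt⟩) with hnoo | pkg
      · have h3' : oP < oX := by omega
        obtain ⟨p, hp, h1, h2, h3⟩ := ag_elim hE1 (by omega)
        obtain ⟨he1, he2, he3⟩ := hEr p hp
        have hPoP : P < oP := hPmin2 hoPb
        have hf : ¬ (p.1 ≤ oP ∧ oP - p.1 ≤ oX - p.2 ∧ oX - p.2 ≤ n - r) :=
          fun hh => hnoo (ag_intro p hp h3' hh.1 hh.2.1 hh.2.2)
        omega
      · exact pkgflow pkg (Or.inl hoPb)
  · rcases htoX with hoXb | hoXt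
    · -- (iv) oP Top, oX Bot
      rcases hrest (Or.inr ⟨hoXb, hoPt⟩) with hnoo | pkg
      · -- transfer
        have hne4 : ¬ adjGraph r n E oX oP := fun h => hnoo (ag_symm h)
        have hne3' : ¬ adjGraph r n E oX X := fun h => hne3 (ag_symm h)
        have c1 := nonedge_cross hEr hr hn5 hPb hXt hne1 hXhi
        have c2 := nonedge_cross hEr hr hn5 hPb hoPt hne2 hoPhi
        have c3 := nonedge_cross hEr hr hn5 hoXb hXt hne3' hXhi
        have c4 := nonedge_cross hEr hr hn5 hoXb hoPt hne4 hoPhi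
        exact transfer hEr hr hn5 h2K2 P oX X oP c1.1 c3.1 hXt hoPt
          (by have := hPmin3 hoXb; omega) (by have := hXmax2 hoPt; omega)
          hE1 hE2 c1.2 c2.2 c3.2 c4.2
      · exact pkgflow pkg (Or.inr ⟨hoPt, hoXb⟩)
    · -- (ii) both Top
      have hXoX : oX < X := hXmax3 hoXt
      have hXoP : oP < X := hXmax2 hoPt
      have hne3' : ¬ adjGraph r n E oX X := fun h => hne3 (ag_symm h)
      obtain ⟨p, hp, h1, h2, h3⟩ := ag_elim (ag_symm hE2) hXoP
      obtain ⟨he1, he2, he3⟩ := hEr p hp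
      have hf1 : ¬ (p.1 ≤ oX ∧ oX - p.1 ≤ X - p.2 ∧ X - p.2 ≤ n - r) :=
        fun hh => hne3' (ag_intro p hp hXoX hh.1 hh.2.1 hh.2.2)
      have hoPoX : oP < oX := by omega
      obtain ⟨q, hq, hq1, hq2, hq3⟩ := ag_elim hE1 (by omega)
      obtain ⟨hqe1, hqe2, hqe3⟩ := hEr q hq
      have hf2 : ¬ (q.1 ≤ P ∧ P - q.1 ≤ oP - q.2 ∧ oP - q.2 ≤ n - r) :=
        fun hh => hne2 (ag_intro q hq (by omega) hh.1 hh.2.1 hh.2.2)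
      omega


/-- all-bottom anticycle is impossible -/
lemma allbot_case (hEr : ∀ e ∈ E, 1 ≤ e.1 ∧ e.1 < e.2 ∧ e.2 ≤ r)
    (hr : 1 ≤ r) (hn5 : 5 * r ≤ n) (m : ℕ) (hm : 4 ≤ m) (a : ℕ → ℤ)
    (hdist : ∀ s, s < m → ∀ t, t < m → s ≠ t → a s ≠ a t)
    (hnon : ∀ t, t < m → ¬ adjGraph r n E (a t) (a ((t + 1) % m)))
    (hadj : ∀ s, s < m → ∀ t, t < m → s ≠ t → (s + 1) % m ≠ t → (t + 1) % m ≠ s →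
      adjGraph r n E (a s) (a t))
    (hallB : ∀ t, t < m → a t ≤ 2 * r - 2) : False := by
  have hm0 : 0 < m := by omega
  have hmlt : ∀ x : ℕ, x % m < m := fun x => Nat.mod_lt x hm0
  -- min vertex
  obtain ⟨t0, ht0mem, ht0min⟩ := Finset.exists_min_image (Finset.range m) a
    ⟨0, Finset.mem_range.mpr hm0⟩
  have ht0 : t0 < m := Finset.mem_range.mp ht0mem
  have hmin : ∀ t, t < m → a t0 ≤ a t := fun t ht => ht0min t (Finset.mem_range.mpr ht)
  -- canonical offsets from t0
  have hofs : ∀ d : ℕ, d < m → ((t0 + d) % m = t0 ↔ d = 0) := by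
    intro d hd
    constructor
    · intro h
      have h' : (t0 + d) % m = (t0 + 0) % m := by
        rwa [add_zero, Nat.mod_eq_of_lt ht0]
      exact modinj hd hm0 h'
    · intro h; subst h; rw [add_zero, Nat.mod_eq_of_lt ht0]
  have hofsne : ∀ d1 d2 : ℕ, d1 < m → d2 < m → d1 ≠ d2 →
      (t0 + d1) % m ≠ (t0 + d2) % m := fun d1 d2 h1 h2 hne h => hne (modinj h1 h2 h)
  have hvalne : ∀ d1 d2 : ℕ, d1 < m → d2 < m → d1 ≠ d2 →
      a ((t0 + d1) % m) ≠ a ((t0 + d2) % m) :=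
    fun d1 d2 h1 h2 hne => hdist _ (hmlt _) _ (hmlt _) (hofsne d1 d2 h1 h2 hne)
  have hvalne0 : ∀ d : ℕ, d < m → d ≠ 0 → a ((t0 + d) % m) ≠ a t0 := by
    intro d hd hne h
    have h0 : a ((t0 + d) % m) = a ((t0 + 0) % m) := by
      rwa [add_zero, Nat.mod_eq_of_lt ht0]
    exact hvalne d 0 hd hm0 hne h0
  -- the neighbours
  set y := a ((t0 + 1) % m) with hy
  set z := a ((t0 + (m - 1)) % m) with hz
  have hPy : a t0 < y := by
    have := hmin _ (hmlt (t0 + 1))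
    have := hvalne0 1 (by omega) (by omega)
    omega
  have hPz : a t0 < z := by
    have := hmin _ (hmlt (t0 + (m - 1)))
    have := hvalne0 (m - 1) (by omega) (by omega)
    omega
  have hyz : y ≠ z := hvalne 1 (m - 1) (by omega) (by omega) (by omega)
  -- nonedges to the neighbours
  have hnePy : ¬ adjGraph r n E (a t0) y := hnon t0 ht0
  have hnePz : ¬ adjGraph r n E (a t0) z := by
    intro h
    have h1 : ((t0 + (m - 1)) % m + 1) % m = t0 := by
      rw [addmod]
      have e : t0 + (m - 1) + 1 = t0 + m := by omega
      rw [e, Nat.add_mod_right, Nat.mod_eq_of_lt ht0]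
    have := hnon ((t0 + (m - 1)) % m) (hmlt _)
    rw [h1] at this
    exact this (ag_symm h)
  -- G-edge between the two neighbours
  have hEyz : adjGraph r n E y z := by
    apply hadj _ (hmlt _) _ (hmlt _)
    · exact hofsne 1 (m - 1) (by omega) (by omega) (by omega)
    · rw [addmod]
      have e : t0 + 1 + 1 = t0 + 2 := by omega
      rw [e]
      exact hofsne 2 (m - 1) (by omega) (by omega) (by omega)
    · rw [addmod]
      have e : t0 + (m - 1) + 1 = t0 + m := by omega
      rw [e, Nat.add_mod_right, Nat.mod_eq_of_lt ht0]
      intro h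
      exact hofsne 1 0 (by omega) (by omega) (by omega) (by
        rw [add_zero, Nat.mod_eq_of_lt ht0]; exact h.symm)
  rcases lt_or_gt_of_ne hyz with hlt | hlt
  · -- y < z, far neighbour of y is at offset 2
    set w := a ((t0 + 2) % m) with hw
    have hEPw : adjGraph r n E (a t0) w := by
      apply hadj t0 ht0 _ (hmlt _)
      · intro h; exact hofsne 0 2 (by omega) (by omega) (by omega) (by
          rw [add_zero, Nat.mod_eq_of_lt ht0]; exact h)
      · exact hofsne 1 2 (by omega) (by omega) (by omega)
      · rw [addmod]
        have e : t0 + 2 + 1 = t0 + 3 := by omega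
        rw [e]
        intro h
        exact hofsne 3 0 (by omega) (by omega) (by omega) (by
          rw [add_zero, Nat.mod_eq_of_lt ht0]; exact h)
    have hneyw : ¬ adjGraph r n E y w := by
      have := hnon ((t0 + 1) % m) (hmlt _)
      rw [addmod] at this
      have e : t0 + 1 + 1 = t0 + 2 := by omega
      rw [e] at this
      exact this
    have hPw : a t0 < w := by
      have := hmin _ (hmlt (t0 + 2))
      have := hvalne0 2 (by omega) (by omega)
      omega
    obtain ⟨p, hp, hp1, hp2, hp3⟩ := ag_elim hEPw hPw
    obtain ⟨hpe1, hpe2, hpe3⟩ := hEr p hp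
    have hf1 : ¬ (p.1 ≤ a t0 ∧ a t0 - p.1 ≤ z - p.2 ∧ z - p.2 ≤ n - r) :=
      fun hh => hnePz (ag_intro p hp hPz hh.1 hh.2.1 hh.2.2)
    -- w > z
    have hzB := hallB _ (hmlt (t0 + (m - 1)))
    have hwB := hallB _ (hmlt (t0 + 2))
    have hyB := hallB _ (hmlt (t0 + 1))
    rw [← hz] at hzB
    rw [← hw] at hwB
    rw [← hy] at hyB
    have hwz : z < w := by omega
    obtain ⟨q, hq, hq1, hq2, hq3⟩ := ag_elim hEyz hlt
    obtain ⟨hqe1, hqe2, hqe3⟩ := hEr q hq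
    have hf2 : ¬ (q.1 ≤ y ∧ y - q.1 ≤ w - q.2 ∧ w - q.2 ≤ n - r) :=
      fun hh => hneyw (ag_intro q hq (by omega) hh.1 hh.2.1 hh.2.2)
    omega
  · -- z < y, far neighbour of z is at offset m-2
    set w := a ((t0 + (m - 2)) % m) with hw
    have hEPw : adjGraph r n E (a t0) w := by
      apply hadj t0 ht0 _ (hmlt _)
      · intro h; exact hofsne 0 (m - 2) (by omega) (by omega) (by omega) (by
          rw [add_zero, Nat.mod_eq_of_lt ht0]; exact h)
      · exact hofsne 1 (m - 2) (by omega) (by omega) (by omega)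
      · rw [addmod]
        have e : t0 + (m - 2) + 1 = t0 + (m - 1) := by omega
        rw [e]
        intro h
        exact hofsne (m - 1) 0 (by omega) (by omega) (by omega) (by
          rw [add_zero, Nat.mod_eq_of_lt ht0]; exact h)
    have hnezw : ¬ adjGraph r n E z w := by
      have := hnon ((t0 + (m - 2)) % m) (hmlt _)
      rw [addmod] at this
      have e : t0 + (m - 2) + 1 = t0 + (m - 1) := by omega
      rw [e] at this
      exact fun h => this (ag_symm h)
    have hPw : a t0 < w := by
      have := hmin _ (hmlt (t0 + (m - 2)))
      have := hvalne0 (m - 2) (by omega) (by omega)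
      omega
    obtain ⟨p, hp, hp1, hp2, hp3⟩ := ag_elim hEPw hPw
    obtain ⟨hpe1, hpe2, hpe3⟩ := hEr p hp
    have hf1 : ¬ (p.1 ≤ a t0 ∧ a t0 - p.1 ≤ y - p.2 ∧ y - p.2 ≤ n - r) :=
      fun hh => hnePy (ag_intro p hp hPy hh.1 hh.2.1 hh.2.2)
    have hzB := hallB _ (hmlt (t0 + (m - 1)))
    have hwB := hallB _ (hmlt (t0 + (m - 2)))
    have hyB := hallB _ (hmlt (t0 + 1))
    rw [← hz] at hzB
    rw [← hw] at hwB
    rw [← hy] at hyB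
    have hwy : y < w := by omega
    obtain ⟨q, hq, hq1, hq2, hq3⟩ := ag_elim (ag_symm hEyz) hlt
    obtain ⟨hqe1, hqe2, hqe3⟩ := hEr q hq
    have hf2 : ¬ (q.1 ≤ z ∧ z - q.1 ≤ w - q.2 ∧ w - q.2 ≤ n - r) :=
      fun hh => hnezw (ag_intro q hq (by omega) hh.1 hh.2.1 hh.2.2)
    omega


/-- all-top anticycle is impossible -/
lemma alltop_case (hEr : ∀ e ∈ E, 1 ≤ e.1 ∧ e.1 < e.2 ∧ e.2 ≤ r)
    (hr : 1 ≤ r) (hn5 : 5 * r ≤ n) (m : ℕ) (hm : 4 ≤ m) (a : ℕ → ℤ)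
    (hdist : ∀ s, s < m → ∀ t, t < m → s ≠ t → a s ≠ a t)
    (hnon : ∀ t, t < m → ¬ adjGraph r n E (a t) (a ((t + 1) % m)))
    (hadj : ∀ s, s < m → ∀ t, t < m → s ≠ t → (s + 1) % m ≠ t → (t + 1) % m ≠ s →
      adjGraph r n E (a s) (a t))
    (hallT : ∀ t, t < m → n - 2 * r + 2 ≤ a t) : False := by
  have hm0 : 0 < m := by omega
  have hmlt : ∀ x : ℕ, x % m < m := fun x => Nat.mod_lt x hm0
  obtain ⟨t0, ht0mem, ht0max⟩ := Finset.exists_max_image (Finset.range m) a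
    ⟨0, Finset.mem_range.mpr hm0⟩
  have ht0 : t0 < m := Finset.mem_range.mp ht0mem
  have hmax : ∀ t, t < m → a t ≤ a t0 := fun t ht => ht0max t (Finset.mem_range.mpr ht)
  have hofsne : ∀ d1 d2 : ℕ, d1 < m → d2 < m → d1 ≠ d2 →
      (t0 + d1) % m ≠ (t0 + d2) % m := fun d1 d2 h1 h2 hne h => hne (modinj h1 h2 h)
  have hvalne : ∀ d1 d2 : ℕ, d1 < m → d2 < m → d1 ≠ d2 →
      a ((t0 + d1) % m) ≠ a ((t0 + d2) % m) :=
    fun d1 d2 h1 h2 hne => hdist _ (hmlt _) _ (hmlt _) (hofsne d1 d2 h1 h2 hne)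
  have hvalne0 : ∀ d : ℕ, d < m → d ≠ 0 → a ((t0 + d) % m) ≠ a t0 := by
    intro d hd hne h
    have h0 : a ((t0 + d) % m) = a ((t0 + 0) % m) := by
      rwa [add_zero, Nat.mod_eq_of_lt ht0]
    exact hvalne d 0 hd hm0 hne h0
  set y := a ((t0 + 1) % m) with hy
  set z := a ((t0 + (m - 1)) % m) with hz
  have hPy : y < a t0 := by
    have := hmax _ (hmlt (t0 + 1))
    have := hvalne0 1 (by omega) (by omega)
    omega
  have hPz : z < a t0 := by
    have := hmax _ (hmlt (t0 + (m - 1)))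
    have := hvalne0 (m - 1) (by omega) (by omega)
    omega
  have hyz : y ≠ z := hvalne 1 (m - 1) (by omega) (by omega) (by omega)
  have hnePy : ¬ adjGraph r n E (a t0) y := hnon t0 ht0
  have hnePz : ¬ adjGraph r n E (a t0) z := by
    intro h
    have h1 : ((t0 + (m - 1)) % m + 1) % m = t0 := by
      rw [addmod]
      have e : t0 + (m - 1) + 1 = t0 + m := by omega
      rw [e, Nat.add_mod_right, Nat.mod_eq_of_lt ht0]
    have := hnon ((t0 + (m - 1)) % m) (hmlt _)
    rw [h1] at this
    exact this (ag_symm h)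
  have hEyz : adjGraph r n E y z := by
    apply hadj _ (hmlt _) _ (hmlt _)
    · exact hofsne 1 (m - 1) (by omega) (by omega) (by omega)
    · rw [addmod]
      have e : t0 + 1 + 1 = t0 + 2 := by omega
      rw [e]
      exact hofsne 2 (m - 1) (by omega) (by omega) (by omega)
    · rw [addmod]
      have e : t0 + (m - 1) + 1 = t0 + m := by omega
      rw [e, Nat.add_mod_right, Nat.mod_eq_of_lt ht0]
      intro h
      exact hofsne 1 0 (by omega) (by omega) (by omega) (by
        rw [add_zero, Nat.mod_eq_of_lt ht0]; exact h.symm)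
  have hzT := hallT _ (hmlt (t0 + (m - 1)))
  have hyT := hallT _ (hmlt (t0 + 1))
  rw [← hz] at hzT
  rw [← hy] at hyT
  rcases lt_or_gt_of_ne hyz with hlt | hlt
  · -- y < z : larger neighbour is z, far neighbour of z at offset m-2
    set w := a ((t0 + (m - 2)) % m) with hw
    have hwT := hallT _ (hmlt (t0 + (m - 2)))
    rw [← hw] at hwT
    have hEPw : adjGraph r n E (a t0) w := by
      apply hadj t0 ht0 _ (hmlt _)
      · intro h; exact hofsne 0 (m - 2) (by omega) (by omega) (by omega) (by
          rw [add_zero, Nat.mod_eq_of_lt ht0]; exact h)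
      · exact hofsne 1 (m - 2) (by omega) (by omega) (by omega)
      · rw [addmod]
        have e : t0 + (m - 2) + 1 = t0 + (m - 1) := by omega
        rw [e]
        intro h
        exact hofsne (m - 1) 0 (by omega) (by omega) (by omega) (by
          rw [add_zero, Nat.mod_eq_of_lt ht0]; exact h)
    have hnezw : ¬ adjGraph r n E z w := by
      have := hnon ((t0 + (m - 2)) % m) (hmlt _)
      rw [addmod] at this
      have e : t0 + (m - 2) + 1 = t0 + (m - 1) := by omega
      rw [e] at this
      exact fun h => this (ag_symm h)
    have hPw : w < a t0 := by
      have := hmax _ (hmlt (t0 + (m - 2)))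
      have := hvalne0 (m - 2) (by omega) (by omega)
      omega
    -- extraction of edge (w, a t0)
    obtain ⟨p, hp, hp1, hp2, hp3⟩ := ag_elim (ag_symm hEPw) hPw
    obtain ⟨hpe1, hpe2, hpe3⟩ := hEr p hp
    -- nonedge (y, a t0) : y is the smaller neighbour here
    have hf1 : ¬ (p.1 ≤ y ∧ y - p.1 ≤ a t0 - p.2 ∧ a t0 - p.2 ≤ n - r) :=
      fun hh => hnePy (ag_symm (ag_intro p hp hPy hh.1 hh.2.1 hh.2.2))
    -- gives w < y
    have hwy : w < y := by omega
    -- edge (y, z), nonedge (w, z)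
    obtain ⟨q, hq, hq1, hq2, hq3⟩ := ag_elim hEyz hlt
    obtain ⟨hqe1, hqe2, hqe3⟩ := hEr q hq
    have hf2 : ¬ (q.1 ≤ w ∧ w - q.1 ≤ z - q.2 ∧ z - q.2 ≤ n - r) :=
      fun hh => hnezw (ag_symm (ag_intro q hq (by omega) hh.1 hh.2.1 hh.2.2))
    omega
  · -- z < y : larger neighbour is y, far neighbour of y at offset 2
    set w := a ((t0 + 2) % m) with hw
    have hwT := hallT _ (hmlt (t0 + 2))
    rw [← hw] at hwT
    have hEPw : adjGraph r n E (a t0) w := by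
      apply hadj t0 ht0 _ (hmlt _)
      · intro h; exact hofsne 0 2 (by omega) (by omega) (by omega) (by
          rw [add_zero, Nat.mod_eq_of_lt ht0]; exact h)
      · exact hofsne 1 2 (by omega) (by omega) (by omega)
      · rw [addmod]
        have e : t0 + 2 + 1 = t0 + 3 := by omega
        rw [e]
        intro h
        exact hofsne 3 0 (by omega) (by omega) (by omega) (by
          rw [add_zero, Nat.mod_eq_of_lt ht0]; exact h)
    have hneyw : ¬ adjGraph r n E y w := by
      have := hnon ((t0 + 1) % m) (hmlt _)
      rw [addmod] at this
      have e : t0 + 1 + 1 = t0 + 2 := by omega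
      rw [e] at this
      exact this
    have hPw : w < a t0 := by
      have := hmax _ (hmlt (t0 + 2))
      have := hvalne0 2 (by omega) (by omega)
      omega
    obtain ⟨p, hp, hp1, hp2, hp3⟩ := ag_elim (ag_symm hEPw) hPw
    obtain ⟨hpe1, hpe2, hpe3⟩ := hEr p hp
    have hf1 : ¬ (p.1 ≤ z ∧ z - p.1 ≤ a t0 - p.2 ∧ a t0 - p.2 ≤ n - r) :=
      fun hh => hnePz (ag_symm (ag_intro p hp hPz hh.1 hh.2.1 hh.2.2))
    have hwz : w < z := by omega
    obtain ⟨q, hq, hq1, hq2, hq3⟩ := ag_elim (ag_symm hEyz) hlt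
    obtain ⟨hqe1, hqe2, hqe3⟩ := hEr q hq
    have hf2 : ¬ (q.1 ≤ w ∧ w - q.1 ≤ y - q.2 ∧ y - q.2 ≤ n - r) :=
      fun hh => hneyw (ag_symm (ag_intro q hq (by omega) hh.1 hh.2.1 hh.2.2))
    omega


end Stmt11Helpers

theorem stmt11 (r : ℤ) (hr : 1 ≤ r) (E : Set (ℤ × ℤ)) (hE : E.Nonempty)
    (hEr : ∀ e ∈ E, 1 ≤ e.1 ∧ e.1 < e.2 ∧ e.2 ≤ r)
    (h2K2 : ¬ HasInducedKK2 (adjGraph r (3 * r) E) 2)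
    (hconsec : ∃ e ∈ E, e.2 - e.1 = 1)
    (n : ℤ) (hn : max (5 * r) (2 * r * (r - 2)) ≤ n) :
    Cochordal (adjGraph r n E) := by
  classical
  intro m hm a hanti
  obtain ⟨hdist, hnon, hadj⟩ := hanti
  have hn5 : 5 * r ≤ n := le_trans (le_max_left _ _) hn
  obtain ⟨e₀, he₀, he₀d⟩ := hconsec
  have hcc : ∃ q ∈ E, q.2 = q.1 + 1 := ⟨e₀, he₀, by omega⟩
  have hr2 : 2 ≤ r := by
    obtain ⟨h1, h2, h3⟩ := hEr e₀ he₀; omega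
  have hm0 : 0 < m := by omega
  have hmlt : ∀ x : ℕ, x % m < m := fun x => Nat.mod_lt x hm0
  have hofsne : ∀ (k : ℕ), ∀ d1 d2 : ℕ, d1 < m → d2 < m → d1 ≠ d2 →
      (k + d1) % m ≠ (k + d2) % m := fun k d1 d2 h1 h2 hne h => hne (modinj h1 h2 h)
  have hself : ∀ k : ℕ, k < m → (k + 0) % m = k := by
    intro k hk; rw [add_zero, Nat.mod_eq_of_lt hk]
  have hinjv : ∀ (k : ℕ), ∀ d1 d2 : ℕ, d1 < m → d2 < m →
      a ((k + d1) % m) = a ((k + d2) % m) → d1 = d2 := by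
    intro k d1 d2 h1 h2 h
    by_contra hne
    exact hdist _ (hmlt _) _ (hmlt _) (hofsne k d1 d2 h1 h2 hne) h
  have hLOHI : ∀ t, t < m → (∃ p ∈ E, p.1 ≤ a t) ∧ (∃ p ∈ E, a t ≤ n - r + p.2) := by
    intro t ht
    have h1 : t ≠ (t + 2) % m := by
      intro h
      exact hofsne t 0 2 (by omega) (by omega) (by omega) (by rw [hself t ht]; exact h)
    have h2 : (t + 1) % m ≠ (t + 2) % m := hofsne t 1 2 (by omega) (by omega) (by omega)
    have h3 : ((t + 2) % m + 1) % m ≠ t := by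
      rw [addmod]
      have e : t + 2 + 1 = t + 3 := by omega
      rw [e]
      intro h
      exact hofsne t 3 0 (by omega) (by omega) (by omega) (by rw [hself t ht]; exact h)
    have hA2 := hadj t ht ((t + 2) % m) (hmlt _) h1 h2 h3
    rcases hA2 with ⟨hlt, p, hp, hh1, hh2, hh3⟩ | ⟨hlt, p, hp, hh1, hh2, hh3⟩
    · exact ⟨⟨p, hp, hh1⟩, ⟨p, hp, by omega⟩⟩
    · exact ⟨⟨p, hp, by omega⟩, ⟨p, hp, by omega⟩⟩
  have htype : ∀ t, t < m → a t ≤ 2 * r - 2 ∨ n - 2 * r + 2 ≤ a t := by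
    intro t ht
    have ht1 : (t + 1) % m < m := hmlt _
    have hne : t ≠ (t + 1) % m := by
      intro h
      exact hofsne t 0 1 (by omega) (by omega) (by omega) (by rw [hself t ht]; exact h)
    exact typing_val hEr hr hn5 hcc (hdist t ht _ ht1 hne) (hnon t ht)
      (hLOHI _ ht1).1 (hLOHI _ ht1).2
  by_cases hexT : ∃ t, t < m ∧ n - 2 * r + 2 ≤ a t
  swap
  · -- all bottom
    push_neg at hexT
    refine allbot_case hEr hr hn5 m hm a hdist hnon hadj (fun t ht => ?_)
    rcases htype t ht with h | h
    · exact h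
    · exfalso; have := hexT t ht; omega
  by_cases hexB : ∃ t, t < m ∧ a t ≤ 2 * r - 2
  swap
  · -- all top
    push_neg at hexB
    refine alltop_case hEr hr hn5 m hm a hdist hnon hadj (fun t ht => ?_)
    rcases htype t ht with h | h
    · exfalso; have := hexB t ht; omega
    · exact h
  -- MIXED CASE
  obtain ⟨tb, htb, htbB⟩ := hexB
  obtain ⟨tt', htt, httT⟩ := hexT
  obtain ⟨tP, htPmem, htPmin⟩ := Finset.exists_min_image
    ((Finset.range m).filter (fun t => a t ≤ 2 * r - 2)) a
    ⟨tb, Finset.mem_filter.mpr ⟨Finset.mem_range.mpr htb, htbB⟩⟩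
  have htP : tP < m := Finset.mem_range.mp (Finset.mem_filter.mp htPmem).1
  have htPb : a tP ≤ 2 * r - 2 := (Finset.mem_filter.mp htPmem).2
  have hPmin : ∀ t, t < m → a t ≤ 2 * r - 2 → a tP ≤ a t := fun t ht hb =>
    htPmin t (Finset.mem_filter.mpr ⟨Finset.mem_range.mpr ht, hb⟩)
  obtain ⟨tX, htXmem, htXmax⟩ := Finset.exists_max_image
    ((Finset.range m).filter (fun t => n - 2 * r + 2 ≤ a t)) a
    ⟨tt', Finset.mem_filter.mpr ⟨Finset.mem_range.mpr htt, httT⟩⟩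
  have htX : tX < m := Finset.mem_range.mp (Finset.mem_filter.mp htXmem).1
  have htXt : n - 2 * r + 2 ≤ a tX := (Finset.mem_filter.mp htXmem).2
  have hXmax : ∀ t, t < m → n - 2 * r + 2 ≤ a t → a t ≤ a tX := fun t ht hb =>
    htXmax t (Finset.mem_filter.mpr ⟨Finset.mem_range.mpr ht, hb⟩)
  have htPX : tP ≠ tX := by
    intro h; rw [h] at htPb; omega
  have hPX : a tP < a tX := by omega
  -- a cross nonedge whose top endpoint is the maximum top
  have hcross : ∃ s, s < m ∧ a s ≤ 2 * r - 2 ∧ ¬ adjGraph r n E (a s) (a tX) := by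
    obtain ⟨l, hl, hgl, hgl1⟩ := find_switch
      (fun j => n - 2 * r + 2 ≤ a ((tb + j) % m)) ((tt' + m - tb) % m)
      (by
        show ¬ (n - 2 * r + 2 ≤ a ((tb + 0) % m))
        rw [hself tb htb]; omega)
      (by
        show n - 2 * r + 2 ≤ a ((tb + (tt' + m - tb) % m) % m)
        rw [addmod']
        have e : tb + (tt' + m - tb) = tt' + m := by omega
        rw [e, Nat.add_mod_right, Nat.mod_eq_of_lt htt]
        exact httT)
    have hs0m : (tb + l) % m < m := hmlt _
    have hs0b : a ((tb + l) % m) ≤ 2 * r - 2 := by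
      rcases htype _ hs0m with h | h
      · exact h
      · exact absurd h hgl
    have hs0p : (((tb + l) % m + 1) % m) = (tb + (l + 1)) % m := by rw [addmod, Nat.add_assoc]
    have hs0pt : n - 2 * r + 2 ≤ a (((tb + l) % m + 1) % m) := by rw [hs0p]; exact hgl1
    have hs0pm : ((tb + l) % m + 1) % m < m := hmlt _
    have hnes0 := hnon _ hs0m
    by_cases heq : ((tb + l) % m + 1) % m = tX
    · exact ⟨(tb + l) % m, hs0m, hs0b, by rw [← heq]; exact hnes0⟩
    by_cases heq2 : (tX + 1) % m = (tb + l) % m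
    · refine ⟨(tb + l) % m, hs0m, hs0b, ?_⟩
      have := hnon tX htX
      rw [heq2] at this
      exact fun h => this (ag_symm h)
    · exfalso
      have hsne : (tb + l) % m ≠ tX := by
        intro h; rw [h] at hs0b; omega
      have hAX : adjGraph r n E (a ((tb + l) % m)) (a tX) := hadj _ hs0m tX htX hsne heq heq2
      obtain ⟨p, hp, h1, h2, h3⟩ := ag_elim hAX (by omega)
      obtain ⟨hpe1, hpe2, hpe3⟩ := hEr p hp
      have hXle := hXmax _ hs0pm hs0pt
      have hf : ¬ (p.1 ≤ a ((tb + l) % m) ∧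
          a ((tb + l) % m) - p.1 ≤ a (((tb + l) % m + 1) % m) - p.2 ∧
          a (((tb + l) % m + 1) % m) - p.2 ≤ n - r) :=
        fun hh => hnes0 (ag_intro p hp (by omega) hh.1 hh.2.1 hh.2.2)
      omega
  obtain ⟨sq, hsqm, hsqb, hsqne⟩ := hcross
  by_cases hcons : (tP + 1) % m = tX ∨ (tX + 1) % m = tP
  swap
  · -- Case B : (P, X) non-consecutive
    push_neg at hcons
    have hAPX := hadj tP htP tX htX htPX hcons.1 hcons.2
    obtain ⟨p, hp, h1, h2, h3⟩ := ag_elim hAPX hPX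
    obtain ⟨hpe1, hpe2, hpe3⟩ := hEr p hp
    have hsq1 := hPmin sq hsqm hsqb
    have hf : ¬ (p.1 ≤ a sq ∧ a sq - p.1 ≤ a tX - p.2 ∧ a tX - p.2 ≤ n - r) :=
      fun hh => hsqne (ag_intro p hp (by omega) hh.1 hh.2.1 hh.2.2)
    omega
  · rcases hcons with hA1 | hA2
    · -- Orientation 1 : X = a ((tP+1) % m)
      have hsucc1 : (tX + 1) % m = (tP + 2) % m := by
        rw [← hA1, addmod]
      have hsucc3 : ((tP + (m - 1)) % m + 1) % m = tP := by
        rw [addmod]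
        have e : tP + (m - 1) + 1 = tP + m := by omega
        rw [e, Nat.add_mod_right, Nat.mod_eq_of_lt htP]
      have hoPim : (tP + (m - 1)) % m < m := hmlt _
      have hoXim : (tP + 2) % m < m := hmlt _
      have hne1 : ¬ adjGraph r n E (a tP) (a tX) := by
        have := hnon tP htP; rwa [hA1] at this
      have hne2 : ¬ adjGraph r n E (a tP) (a ((tP + (m - 1)) % m)) := by
        have := hnon _ hoPim
        rw [hsucc3] at this
        exact fun h => this (ag_symm h)
      have hne3 : ¬ adjGraph r n E (a tX) (a ((tP + 2) % m)) := by
        have := hnon tX htX; rwa [hsucc1] at this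
      have hE1 : adjGraph r n E (a tP) (a ((tP + 2) % m)) := by
        apply hadj tP htP _ hoXim
        · intro h
          exact hofsne tP 0 2 (by omega) (by omega) (by omega) (by rw [hself tP htP]; exact h)
        · exact hofsne tP 1 2 (by omega) (by omega) (by omega)
        · rw [addmod]
          have e : tP + 2 + 1 = tP + 3 := by omega
          rw [e]
          intro h
          exact hofsne tP 3 0 (by omega) (by omega) (by omega) (by rw [hself tP htP]; exact h)
      have hE2 : adjGraph r n E (a tX) (a ((tP + (m - 1)) % m)) := by
        apply hadj tX htX _ hoPim
        · rw [← hA1]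
          exact hofsne tP 1 (m - 1) (by omega) (by omega) (by omega)
        · rw [hsucc1]
          exact hofsne tP 2 (m - 1) (by omega) (by omega) (by omega)
        · rw [hsucc3]
          exact fun h => htPX h
      have hPmin2 : a ((tP + (m - 1)) % m) ≤ 2 * r - 2 → a tP < a ((tP + (m - 1)) % m) := by
        intro hb
        have h1 := hPmin _ hoPim hb
        have h2 : a tP ≠ a ((tP + (m - 1)) % m) := by
          apply hdist tP htP _ hoPim
          intro h
          exact hofsne tP 0 (m - 1) (by omega) (by omega) (by omega)
            (by rw [hself tP htP]; exact h)
        omega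
      have hPmin3 : a ((tP + 2) % m) ≤ 2 * r - 2 → a tP < a ((tP + 2) % m) := by
        intro hb
        have h1 := hPmin _ hoXim hb
        have h2 : a tP ≠ a ((tP + 2) % m) := by
          apply hdist tP htP _ hoXim
          intro h
          exact hofsne tP 0 2 (by omega) (by omega) (by omega)
            (by rw [hself tP htP]; exact h)
        omega
      have hXmax2 : n - 2 * r + 2 ≤ a ((tP + (m - 1)) % m) → a ((tP + (m - 1)) % m) < a tX := by
        intro hb
        have h1 := hXmax _ hoPim hb
        have h2 : a ((tP + (m - 1)) % m) ≠ a tX := by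
          apply hdist _ hoPim tX htX
          intro h
          rw [← hA1] at h
          exact hofsne tP (m - 1) 1 (by omega) (by omega) (by omega) h
        omega
      have hXmax3 : n - 2 * r + 2 ≤ a ((tP + 2) % m) → a ((tP + 2) % m) < a tX := by
        intro hb
        have h1 := hXmax _ hoXim hb
        have h2 : a ((tP + 2) % m) ≠ a tX := by
          apply hdist _ hoXim tX htX
          intro h
          rw [← hA1] at h
          exact hofsne tP 2 1 (by omega) (by omega) (by omega) h
        omega
      have hrest : ((a ((tP + (m - 1)) % m) ≤ 2 * r - 2 ∧ n - 2 * r + 2 ≤ a ((tP + 2) % m)) ∨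
              (a ((tP + 2) % m) ≤ 2 * r - 2 ∧ n - 2 * r + 2 ≤ a ((tP + (m - 1)) % m))) →
          (¬ adjGraph r n E (a ((tP + (m - 1)) % m)) (a ((tP + 2) % m))) ∨
          (∃ b x : ℤ, b ≤ 2 * r - 2 ∧ n - 2 * r + 2 ≤ x ∧
            ¬ adjGraph r n E b x ∧ (∃ p ∈ E, x ≤ n - r + p.2) ∧ a tP ≤ b ∧ x ≤ a tX ∧
            (adjGraph r n E (a tP) x ∨ x = a ((tP + (m - 1)) % m)) ∧
            (adjGraph r n E (a tX) b ∨ b = a ((tP + 2) % m)) ∧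
            ¬ (x = a ((tP + (m - 1)) % m) ∧ b = a ((tP + 2) % m))) := by
        intro hdiff
        by_cases hm4 : m = 4
        · left
          have h1 : ((tP + 2) % m + 1) % m = (tP + (m - 1)) % m := by
            rw [addmod]
            have e : tP + 2 + 1 = tP + (m - 1) := by omega
            rw [e]
          have := hnon _ hoXim
          rw [h1] at this
          exact fun h => this (ag_symm h)
        · right
          have hm5 : 5 ≤ m := by omega
          obtain ⟨l, hl4, hpat⟩ := seg_cross hm5 htype (by omega) tP (by
            rcases hdiff with ⟨h1, h2⟩ | ⟨h1, h2⟩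
            · exact Or.inr ⟨h1, h2⟩
            · exact Or.inl ⟨h1, h2⟩)
          have hsuccl : ∀ j : ℕ, ((tP + (2 + j)) % m + 1) % m = (tP + (3 + j)) % m := by
            intro j
            rw [addmod]
            have e : tP + (2 + j) + 1 = tP + (3 + j) := by omega
            rw [e]
          rcases hpat with ⟨hbb, hxx⟩ | ⟨hxx, hbb⟩
          · -- bottom at 2+l, top at 3+l
            refine ⟨a ((tP + (2 + l)) % m), a ((tP + (3 + l)) % m), hbb, hxx, ?_,
              (hLOHI ((tP + (3 + l)) % m) (hmlt _)).2,
              hPmin _ (hmlt _) hbb, hXmax _ (hmlt _) hxx, ?_, ?_, ?_⟩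
            · have := hnon _ (hmlt (tP + (2 + l)))
              rwa [hsuccl l] at this
            · by_cases hcase : 3 + l = m - 1
              · right; rw [hcase]
              · left
                apply hadj tP htP _ (hmlt _)
                · intro h
                  exact hofsne tP 0 (3 + l) (by omega) (by omega) (by omega)
                    (by rw [hself tP htP]; exact h)
                · exact hofsne tP 1 (3 + l) (by omega) (by omega) (by omega)
                · rw [addmod]
                  have e : tP + (3 + l) + 1 = tP + (4 + l) := by omega
                  rw [e]
                  intro h
                  exact hofsne tP (4 + l) 0 (by omega) (by omega) (by omega)
                    (by rw [hself tP htP]; exact h)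
            · by_cases hcase : l = 0
              · right
                subst hcase
                rfl
              · left
                apply hadj tX htX _ (hmlt _)
                · rw [← hA1]
                  exact hofsne tP 1 (2 + l) (by omega) (by omega) (by omega)
                · rw [hsucc1]
                  exact hofsne tP 2 (2 + l) (by omega) (by omega) (by omega)
                · rw [hsuccl l, ← hA1]
                  exact hofsne tP (3 + l) 1 (by omega) (by omega) (by omega)
            · rintro ⟨hxo, hbo⟩
              have h1 := hinjv tP (3 + l) (m - 1) (by omega) (by omega) hxo
              have h2 := hinjv tP (2 + l) 2 (by omega) (by omega) hbo
              omega
          · -- top at 2+l, bottom at 3+l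
            refine ⟨a ((tP + (3 + l)) % m), a ((tP + (2 + l)) % m), hbb, hxx, ?_,
              (hLOHI ((tP + (2 + l)) % m) (hmlt _)).2,
              hPmin _ (hmlt _) hbb, hXmax _ (hmlt _) hxx, ?_, ?_, ?_⟩
            · have := hnon _ (hmlt (tP + (2 + l)))
              rw [hsuccl l] at this
              exact fun h => this (ag_symm h)
            · by_cases hcase : 2 + l = m - 1
              · right; rw [hcase]
              · left
                apply hadj tP htP _ (hmlt _)
                · intro h
                  exact hofsne tP 0 (2 + l) (by omega) (by omega) (by omega)
                    (by rw [hself tP htP]; exact h)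
                · exact hofsne tP 1 (2 + l) (by omega) (by omega) (by omega)
                · rw [hsuccl l]
                  intro h
                  exact hofsne tP (3 + l) 0 (by omega) (by omega) (by omega)
                    (by rw [hself tP htP]; exact h)
            · left
              apply hadj tX htX _ (hmlt _)
              · rw [← hA1]
                exact hofsne tP 1 (3 + l) (by omega) (by omega) (by omega)
              · rw [hsucc1]
                exact hofsne tP 2 (3 + l) (by omega) (by omega) (by omega)
              · rw [addmod]
                have e : tP + (3 + l) + 1 = tP + (4 + l) := by omega
                rw [e]
                by_cases h4 : 4 + l = m
                · rw [h4, Nat.add_mod_right, Nat.mod_eq_of_lt htP]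
                  exact fun h => htPX h
                · rw [← hA1]
                  exact hofsne tP (4 + l) 1 (by omega) (by omega) (by omega)
            · rintro ⟨hxo, hbo⟩
              have h2 := hinjv tP (3 + l) 2 (by omega) (by omega) hbo
              omega
      exact caseA_core hEr hr hn5 h2K2 (a tP) (a tX)
        (a ((tP + (m - 1)) % m)) (a ((tP + 2) % m))
        htPb htXt (hLOHI tX htX).2 (hLOHI _ hoPim).2 (htype _ hoPim) (htype _ hoXim)
        hne1 hne2 hne3 hE1 hE2 hPmin2 hPmin3 hXmax2 hXmax3 hrest
    · -- Orientation 2 : P = a ((tX+1) % m)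
      have hsucc1 : (tP + 1) % m = (tX + 2) % m := by
        rw [← hA2, addmod]
      have hsucc3 : ((tX + (m - 1)) % m + 1) % m = tX := by
        rw [addmod]
        have e : tX + (m - 1) + 1 = tX + m := by omega
        rw [e, Nat.add_mod_right, Nat.mod_eq_of_lt htX]
      have hoPim : (tX + 2) % m < m := hmlt _
      have hoXim : (tX + (m - 1)) % m < m := hmlt _
      have hne1 : ¬ adjGraph r n E (a tP) (a tX) := by
        have := hnon tX htX
        rw [hA2] at this
        exact fun h => this (ag_symm h)
      have hne2 : ¬ adjGraph r n E (a tP) (a ((tX + 2) % m)) := by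
        have := hnon tP htP; rwa [hsucc1] at this
      have hne3 : ¬ adjGraph r n E (a tX) (a ((tX + (m - 1)) % m)) := by
        have := hnon _ hoXim
        rw [hsucc3] at this
        exact fun h => this (ag_symm h)
      have hE1 : adjGraph r n E (a tP) (a ((tX + (m - 1)) % m)) := by
        apply hadj tP htP _ hoXim
        · rw [← hA2]
          exact hofsne tX 1 (m - 1) (by omega) (by omega) (by omega)
        · rw [hsucc1]
          exact hofsne tX 2 (m - 1) (by omega) (by omega) (by omega)
        · rw [hsucc3]
          exact fun h => htPX h.symm
      have hE2 : adjGraph r n E (a tX) (a ((tX + 2) % m)) := by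
        apply hadj tX htX _ hoPim
        · intro h
          exact hofsne tX 0 2 (by omega) (by omega) (by omega) (by rw [hself tX htX]; exact h)
        · exact hofsne tX 1 2 (by omega) (by omega) (by omega)
        · rw [addmod]
          have e : tX + 2 + 1 = tX + 3 := by omega
          rw [e]
          intro h
          exact hofsne tX 3 0 (by omega) (by omega) (by omega) (by rw [hself tX htX]; exact h)
      have hPmin2 : a ((tX + 2) % m) ≤ 2 * r - 2 → a tP < a ((tX + 2) % m) := by
        intro hb
        have h1 := hPmin _ hoPim hb
        have h2 : a tP ≠ a ((tX + 2) % m) := by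
          apply hdist tP htP _ hoPim
          intro h
          rw [← hA2] at h
          exact hofsne tX 1 2 (by omega) (by omega) (by omega) h
        omega
      have hPmin3 : a ((tX + (m - 1)) % m) ≤ 2 * r - 2 → a tP < a ((tX + (m - 1)) % m) := by
        intro hb
        have h1 := hPmin _ hoXim hb
        have h2 : a tP ≠ a ((tX + (m - 1)) % m) := by
          apply hdist tP htP _ hoXim
          intro h
          rw [← hA2] at h
          exact hofsne tX 1 (m - 1) (by omega) (by omega) (by omega) h
        omega
      have hXmax2 : n - 2 * r + 2 ≤ a ((tX + 2) % m) → a ((tX + 2) % m) < a tX := by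
        intro hb
        have h1 := hXmax _ hoPim hb
        have h2 : a ((tX + 2) % m) ≠ a tX := by
          apply hdist _ hoPim tX htX
          intro h
          exact hofsne tX 2 0 (by omega) (by omega) (by omega)
            (by rw [hself tX htX]; exact h)
        omega
      have hXmax3 : n - 2 * r + 2 ≤ a ((tX + (m - 1)) % m) → a ((tX + (m - 1)) % m) < a tX := by
        intro hb
        have h1 := hXmax _ hoXim hb
        have h2 : a ((tX + (m - 1)) % m) ≠ a tX := by
          apply hdist _ hoXim tX htX
          intro h
          exact hofsne tX (m - 1) 0 (by omega) (by omega) (by omega)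
            (by rw [hself tX htX]; exact h)
        omega
      have hrest : ((a ((tX + 2) % m) ≤ 2 * r - 2 ∧ n - 2 * r + 2 ≤ a ((tX + (m - 1)) % m)) ∨
              (a ((tX + (m - 1)) % m) ≤ 2 * r - 2 ∧ n - 2 * r + 2 ≤ a ((tX + 2) % m))) →
          (¬ adjGraph r n E (a ((tX + 2) % m)) (a ((tX + (m - 1)) % m))) ∨
          (∃ b x : ℤ, b ≤ 2 * r - 2 ∧ n - 2 * r + 2 ≤ x ∧
            ¬ adjGraph r n E b x ∧ (∃ p ∈ E, x ≤ n - r + p.2) ∧ a tP ≤ b ∧ x ≤ a tX ∧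
            (adjGraph r n E (a tP) x ∨ x = a ((tX + 2) % m)) ∧
            (adjGraph r n E (a tX) b ∨ b = a ((tX + (m - 1)) % m)) ∧
            ¬ (x = a ((tX + 2) % m) ∧ b = a ((tX + (m - 1)) % m))) := by
        intro hdiff
        by_cases hm4 : m = 4
        · left
          have h1 : ((tX + 2) % m + 1) % m = (tX + (m - 1)) % m := by
            rw [addmod]
            have e : tX + 2 + 1 = tX + (m - 1) := by omega
            rw [e]
          have := hnon _ hoPim
          rwa [h1] at this
        · right
          have hm5 : 5 ≤ m := by omega
          obtain ⟨l, hl4, hpat⟩ := seg_cross hm5 htype (by omega) tX (by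
            rcases hdiff with ⟨h1, h2⟩ | ⟨h1, h2⟩
            · exact Or.inl ⟨h1, h2⟩
            · exact Or.inr ⟨h1, h2⟩)
          have hsuccl : ∀ j : ℕ, ((tX + (2 + j)) % m + 1) % m = (tX + (3 + j)) % m := by
            intro j
            rw [addmod]
            have e : tX + (2 + j) + 1 = tX + (3 + j) := by omega
            rw [e]
          rcases hpat with ⟨hbb, hxx⟩ | ⟨hxx, hbb⟩
          · -- bottom at 2+l, top at 3+l
            refine ⟨a ((tX + (2 + l)) % m), a ((tX + (3 + l)) % m), hbb, hxx, ?_,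
              (hLOHI ((tX + (3 + l)) % m) (hmlt _)).2,
              hPmin _ (hmlt _) hbb, hXmax _ (hmlt _) hxx, ?_, ?_, ?_⟩
            · have := hnon _ (hmlt (tX + (2 + l)))
              rwa [hsuccl l] at this
            · -- disj1 : x at offset 3+l, never equals oP (offset 2)
              left
              apply hadj tP htP _ (hmlt _)
              · rw [← hA2]
                exact hofsne tX 1 (3 + l) (by omega) (by omega) (by omega)
              · rw [hsucc1]
                exact hofsne tX 2 (3 + l) (by omega) (by omega) (by omega)
              · rw [addmod]
                have e : tX + (3 + l) + 1 = tX + (4 + l) := by omega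
                rw [e]
                by_cases h4 : 4 + l = m
                · rw [h4, Nat.add_mod_right, Nat.mod_eq_of_lt htX]
                  exact fun h => htPX h.symm
                · rw [← hA2]
                  exact hofsne tX (4 + l) 1 (by omega) (by omega) (by omega)
            · -- disj2 : b at offset 2+l, equals oX iff 2+l = m-1
              by_cases hcase : 2 + l = m - 1
              · right; rw [hcase]
              · left
                apply hadj tX htX _ (hmlt _)
                · intro h
                  exact hofsne tX 0 (2 + l) (by omega) (by omega) (by omega)
                    (by rw [hself tX htX]; exact h)
                · exact hofsne tX 1 (2 + l) (by omega) (by omega) (by omega)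
                · rw [hsuccl l]
                  intro h
                  exact hofsne tX (3 + l) 0 (by omega) (by omega) (by omega)
                    (by rw [hself tX htX]; exact h)
            · rintro ⟨hxo, hbo⟩
              have h1 := hinjv tX (3 + l) 2 (by omega) (by omega) hxo
              omega
          · -- top at 2+l, bottom at 3+l
            refine ⟨a ((tX + (3 + l)) % m), a ((tX + (2 + l)) % m), hbb, hxx, ?_,
              (hLOHI ((tX + (2 + l)) % m) (hmlt _)).2,
              hPmin _ (hmlt _) hbb, hXmax _ (hmlt _) hxx, ?_, ?_, ?_⟩
            · have := hnon _ (hmlt (tX + (2 + l)))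
              rw [hsuccl l] at this
              exact fun h => this (ag_symm h)
            · -- disj1 : x at offset 2+l, equals oP iff l = 0
              by_cases hcase : l = 0
              · right
                subst hcase
                rfl
              · left
                apply hadj tP htP _ (hmlt _)
                · rw [← hA2]
                  exact hofsne tX 1 (2 + l) (by omega) (by omega) (by omega)
                · rw [hsucc1]
                  exact hofsne tX 2 (2 + l) (by omega) (by omega) (by omega)
                · rw [hsuccl l, ← hA2]
                  exact hofsne tX (3 + l) 1 (by omega) (by omega) (by omega)
            · -- disj2 : b at offset 3+l, equals oX iff 3+l = m-1
              by_cases hcase : 3 + l = m - 1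
              · right; rw [hcase]
              · left
                apply hadj tX htX _ (hmlt _)
                · intro h
                  exact hofsne tX 0 (3 + l) (by omega) (by omega) (by omega)
                    (by rw [hself tX htX]; exact h)
                · exact hofsne tX 1 (3 + l) (by omega) (by omega) (by omega)
                · rw [addmod]
                  have e : tX + (3 + l) + 1 = tX + (4 + l) := by omega
                  rw [e]
                  intro h
                  exact hofsne tX (4 + l) 0 (by omega) (by omega) (by omega)
                    (by rw [hself tX htX]; exact h)
            · rintro ⟨hxo, hbo⟩
              have h1 := hinjv tX (2 + l) 2 (by omega) (by omega) hxo
              have h2 := hinjv tX (3 + l) (m - 1) (by omega) (by omega) hbo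
              omega
      exact caseA_core hEr hr hn5 h2K2 (a tP) (a tX)
        (a ((tX + 2) % m)) (a ((tX + (m - 1)) % m))
        htPb htXt (hLOHI tX htX).2 (hLOHI ((tX + 2) % m) hoPim).2
        (htype _ hoPim) (htype _ hoXim)
        hne1 hne2 hne3 hE1 hE2 hPmin2 hPmin3 hXmax2 hXmax3 hrest
end

section
/- With G_n as in the context: let i_min = min{i : (i,j) ∈ E for some j}, and assume that max{j : (i_min, j) ∈ E} = max{j : (i,j) ∈ E}. Then for every integer n ≥ 3r, the graph G_n is cochordal. (By Fröberg's theorem, this yields reg I_n = 2 for all n ≥ 3r.) -/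
namespace Stmt12Aux

/-- minimal gap `e.2 - e.1` among pairs of `E` with first coordinate `≤ u`. -/
noncomputable def beta (E : Set (ℤ × ℤ)) (u : ℤ) : ℤ :=
  sInf ((fun e : ℤ × ℤ => e.2 - e.1) '' {e ∈ E | e.1 ≤ u})

theorem beta_bdd {r : ℤ} {E : Set (ℤ × ℤ)}
    (hEr : ∀ e ∈ E, 1 ≤ e.1 ∧ e.1 < e.2 ∧ e.2 ≤ r) (u : ℤ) :
    BddBelow ((fun e : ℤ × ℤ => e.2 - e.1) '' {e ∈ E | e.1 ≤ u}) := by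
  refine ⟨1, ?_⟩
  rintro g ⟨e, ⟨he, -⟩, rfl⟩
  have := hEr e he
  show (1 : ℤ) ≤ e.2 - e.1
  omega

theorem beta_le {r : ℤ} {E : Set (ℤ × ℤ)}
    (hEr : ∀ e ∈ E, 1 ≤ e.1 ∧ e.1 < e.2 ∧ e.2 ≤ r) {e : ℤ × ℤ} (he : e ∈ E)
    {u : ℤ} (h : e.1 ≤ u) : beta E u ≤ e.2 - e.1 :=
  csInf_le (beta_bdd hEr u) ⟨e, ⟨he, h⟩, rfl⟩

theorem beta_mem {r p q : ℤ} {E : Set (ℤ × ℤ)}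
    (hEr : ∀ e ∈ E, 1 ≤ e.1 ∧ e.1 < e.2 ∧ e.2 ≤ r) (hpq : (p, q) ∈ E)
    {u : ℤ} (hu : p ≤ u) :
    ∃ e ∈ E, e.1 ≤ u ∧ e.2 - e.1 = beta E u := by
  have hne : ((fun e : ℤ × ℤ => e.2 - e.1) '' {e ∈ E | e.1 ≤ u}).Nonempty :=
    ⟨q - p, ⟨(p, q), ⟨hpq, hu⟩, rfl⟩⟩
  obtain ⟨e, ⟨he, hle⟩, heq⟩ := Int.csInf_mem hne (beta_bdd hEr u)
  exact ⟨e, he, hle, heq⟩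

theorem nonadj {r n : ℤ} {E : Set (ℤ × ℤ)} {u v : ℤ}
    (h : ¬ adjGraph r n E u v) (huv : u < v) :
    ∀ e ∈ E, e.1 ≤ u → v - e.2 ≤ n - r → v - u < e.2 - e.1 := by
  intro e he h1 h2
  by_contra hc
  exact h (Or.inl ⟨huv, e, he, h1, by omega, h2⟩)

theorem adj_symm {r n : ℤ} {E : Set (ℤ × ℤ)} {u v : ℤ}
    (h : adjGraph r n E u v) : adjGraph r n E v u := Or.symm h

theorem adj_range {r n p q : ℤ} {E : Set (ℤ × ℤ)}
    (hp : ∀ e ∈ E, p ≤ e.1) (hq : ∀ e ∈ E, e.2 ≤ q) {u v : ℤ}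
    (h : adjGraph r n E u v) :
    (p ≤ u ∧ u ≤ n - r + q) ∧ (p ≤ v ∧ v ≤ n - r + q) := by
  rcases h with ⟨hlt, e, he, h1, h2, h3⟩ | ⟨hlt, e, he, h1, h2, h3⟩ <;>
    have hpe := hp e he <;> have hqe := hq e he <;>
    exact ⟨by omega, by omega⟩

/-- The key simplicial-type lemma, for the ordered case `x < y`. -/
theorem key1 (r n p q : ℤ) (E : Set (ℤ × ℤ))
    (hEr : ∀ e ∈ E, 1 ≤ e.1 ∧ e.1 < e.2 ∧ e.2 ≤ r)
    (hpq : (p, q) ∈ E) (hp : ∀ e ∈ E, p ≤ e.1) (hq : ∀ e ∈ E, e.2 ≤ q)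
    (hn : 3 * r ≤ n)
    (u x y : ℤ)
    (hur : p ≤ u ∧ u ≤ n - r + q) (hxr : p ≤ x ∧ x ≤ n - r + q)
    (hyr : p ≤ y ∧ y ≤ n - r + q)
    (hux : u ≠ x) (huy : u ≠ y)
    (nux : ¬ adjGraph r n E u x) (nuy : ¬ adjGraph r n E u y)
    (hKx : u + beta E u ≤ x + beta E x) (hKy : u + beta E u ≤ y + beta E y)
    (hxy : x < y) (e : ℤ × ℤ) (he : e ∈ E)
    (h1 : e.1 ≤ x) (h2 : x - e.1 ≤ y - e.2) (h3 : y - e.2 ≤ n - r) :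
    False := by
  obtain ⟨hp1, hpq1, hq1⟩ := hEr (p, q) hpq
  simp only at hp1 hpq1 hq1
  obtain ⟨he1, he2, he3⟩ := hEr e he
  -- nonadjacency wrappers
  rcases lt_trichotomy u x with huxlt | heq | hxult
  · -- Case u < x < y
    have huy' : u < y := by omega
    rcases le_or_gt e.1 u with hiu | hui
    · have := nonadj nuy huy' e he hiu h3
      omega
    · -- u < e.1
      have hbx : beta E x ≤ e.2 - e.1 := beta_le hEr he h1
      obtain ⟨e0, he0, he0u, he0b⟩ := beta_mem hEr hpq hur.1
      obtain ⟨he01, he02, he03⟩ := hEr e0 he0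
      have hpe0 := hp e0 he0
      have hqe0 := hq e0 he0
      have hy1 : n - r + e0.2 < y := by
        by_contra hc
        have := nonadj nuy huy' e0 he0 he0u (by omega)
        omega
      have hdq : y - u < q - p := by
        have := nonadj nuy huy' (p, q) hpq (by exact hur.1) (by
          have := hyr.2; simpa using by omega)
        simpa using this
      omega
  · exact hux heq
  · -- x < u
    have nxu : ¬ adjGraph r n E x u := fun h => nux (adj_symm h)
    rcases lt_trichotomy u y with huylt | heq | hyult
    · -- Case x < u < y
      obtain ⟨e0, he0, he0u, he0b⟩ := beta_mem hEr hpq hur.1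
      obtain ⟨he01, he02, he03⟩ := hEr e0 he0
      have hpe0 := hp e0 he0
      have hqe0 := hq e0 he0
      have hbxq : beta E x ≤ q - p := beta_le hEr hpq hxr.1
      have hyu_lt : y - u < beta E u := by
        by_contra hge
        have hi0x : x < e0.1 := by
          by_contra hle
          have : beta E x ≤ e0.2 - e0.1 := beta_le hEr he0 (by omega)
          omega
        have hy1 : n - r + e0.2 < y := by
          by_contra hc
          have := nonadj nuy huylt e0 he0 he0u (by omega)
          omega
        have hdq : y - u < q - p := by
          have := nonadj nuy huylt (p, q) hpq (by exact hur.1) (by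
            have := hyr.2; simpa using by omega)
          simpa using this
        omega
      have hbx : beta E x ≤ e.2 - e.1 := beta_le hEr he h1
      omega
    · exact huy heq
    · -- Case x < y < u
      rcases le_or_gt u (n - r + e.2) with hle | hgt
      · have := nonadj nxu hxult e he h1 (by omega)
        omega
      · obtain ⟨e0, he0, he0u, he0b⟩ := beta_mem hEr hpq hur.1
        obtain ⟨he01, he02, he03⟩ := hEr e0 he0
        have hpe0 := hp e0 he0
        have hbxq : beta E x ≤ q - p := beta_le hEr hpq hxr.1
        have he0x : e0.1 ≤ x := by omega
        have : beta E x ≤ e0.2 - e0.1 := beta_le hEr he0 he0x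
        omega

/-- The key simplicial-type lemma. -/
theorem key (r n p q : ℤ) (E : Set (ℤ × ℤ))
    (hEr : ∀ e ∈ E, 1 ≤ e.1 ∧ e.1 < e.2 ∧ e.2 ≤ r)
    (hpq : (p, q) ∈ E) (hp : ∀ e ∈ E, p ≤ e.1) (hq : ∀ e ∈ E, e.2 ≤ q)
    (hn : 3 * r ≤ n)
    (u x y : ℤ)
    (hur : p ≤ u ∧ u ≤ n - r + q) (hxr : p ≤ x ∧ x ≤ n - r + q)
    (hyr : p ≤ y ∧ y ≤ n - r + q)
    (hux : u ≠ x) (huy : u ≠ y)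
    (nux : ¬ adjGraph r n E u x) (nuy : ¬ adjGraph r n E u y)
    (hKx : u + beta E u ≤ x + beta E x) (hKy : u + beta E u ≤ y + beta E y) :
    ¬ adjGraph r n E x y := by
  intro hA
  rcases hA with ⟨hlt, e, he, h1, h2, h3⟩ | ⟨hlt, e, he, h1, h2, h3⟩
  · exact key1 r n p q E hEr hpq hp hq hn u x y hur hxr hyr hux huy nux nuy
      hKx hKy hlt e he h1 h2 h3
  · exact key1 r n p q E hEr hpq hp hq hn u y x hur hyr hxr huy hux nuy nux
      hKy hKx hlt e he h1 h2 h3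

theorem mod_helper (m k1 k2 t : ℕ) (h1 : k1 < k2) (h2 : k2 - k1 < m)
    (heq : (t + k1) % m = (t + k2) % m) : False := by
  have h : (t + k1) ≡ (t + k2) [MOD m] := heq
  have h' : k1 ≡ k2 [MOD m] := Nat.ModEq.add_left_cancel' t h
  have hd : m ∣ k2 - k1 := (Nat.modEq_iff_dvd' (le_of_lt h1)).mp h'
  have := Nat.le_of_dvd (by omega) hd
  omega

end Stmt12Aux

/-- if `i_min = min{i : (i,j) ∈ E}` and
`max{j : (i_min, j) ∈ E} = max{j : (i,j) ∈ E}` (i.e. some pair `(i_min, jq) ∈ E`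
has `jq` the global maximum of second coordinates), then `G_n` is cochordal
for every `n ≥ 3r`. -/
theorem stmt12 (r : ℤ) (hr : 1 ≤ r) (E : Set (ℤ × ℤ)) (hE : E.Nonempty)
    (hEr : ∀ e ∈ E, 1 ≤ e.1 ∧ e.1 < e.2 ∧ e.2 ≤ r)
    (imin : ℤ) (himin1 : ∃ j, (imin, j) ∈ E) (himin2 : ∀ e ∈ E, imin ≤ e.1)
    (hmax : ∃ jq, (imin, jq) ∈ E ∧ ∀ e ∈ E, e.2 ≤ jq)
    (n : ℤ) (hn : 3 * r ≤ n) :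
    Cochordal (adjGraph r n E) := by
  obtain ⟨q, hpq, hq⟩ := hmax
  set p := imin with hpdef
  intro m hm a hcyc
  obtain ⟨h1, h2, h3⟩ := hcyc
  have hm0 : 0 < m := by omega
  -- each vertex of the anticycle is adjacent to the vertex two steps further
  have hadj2 : ∀ t, t < m → adjGraph r n E (a t) (a ((t + 2) % m)) := by
    intro t ht
    refine h3 t ht ((t + 2) % m) (Nat.mod_lt _ hm0) ?_ ?_ ?_
    · intro h
      exact Stmt12Aux.mod_helper m 0 2 t (by omega) (by omega)
        (by simpa [Nat.mod_eq_of_lt ht] using h)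
    · intro h
      exact Stmt12Aux.mod_helper m 1 2 t (by omega) (by omega) h
    · intro h
      rw [Nat.mod_add_mod] at h
      exact Stmt12Aux.mod_helper m 0 3 t (by omega) (by omega)
        (by simpa [Nat.mod_eq_of_lt ht] using h.symm)
  have hrange : ∀ t, t < m → p ≤ a t ∧ a t ≤ n - r + q := by
    intro t ht
    exact (Stmt12Aux.adj_range himin2 hq (hadj2 t ht)).1
  -- choose the vertex minimizing `K = a t + beta E (a t)`
  obtain ⟨T, hTmem, hTmin⟩ := Finset.exists_min_image (Finset.range m)
    (fun t => a t + Stmt12Aux.beta E (a t)) ⟨0, Finset.mem_range.mpr hm0⟩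
  have hT : T < m := Finset.mem_range.mp hTmem
  set s' := (T + 1) % m with hs'def
  set t' := (T + (m - 1)) % m with ht'def
  have hs' : s' < m := Nat.mod_lt _ hm0
  have ht' : t' < m := Nat.mod_lt _ hm0
  have ht'1 : (t' + 1) % m = T := by
    rw [ht'def, Nat.mod_add_mod]
    have h : T + (m - 1) + 1 = T + m := by omega
    rw [h, Nat.add_mod_right, Nat.mod_eq_of_lt hT]
  have hst : s' ≠ t' := fun h =>
    Stmt12Aux.mod_helper m 1 (m - 1) T (by omega) (by omega) h
  have hTs' : T ≠ s' := fun h =>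
    Stmt12Aux.mod_helper m 0 1 T (by omega) (by omega)
      (by simpa [Nat.mod_eq_of_lt hT] using h)
  have hTt' : T ≠ t' := fun h =>
    Stmt12Aux.mod_helper m 0 (m - 1) T (by omega) (by omega)
      (by simpa [Nat.mod_eq_of_lt hT] using h)
  -- the two neighbours of the minimizing vertex are adjacent
  have hadjxy : adjGraph r n E (a s') (a t') := by
    refine h3 s' hs' t' ht' hst ?_ ?_
    · intro h
      rw [hs'def, Nat.mod_add_mod] at h
      exact Stmt12Aux.mod_helper m 2 (m - 1) T (by omega) (by omega) h
    · intro h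
      rw [ht'1] at h
      exact hTs' h
  -- nonadjacencies from the anticycle
  have nux : ¬ adjGraph r n E (a T) (a s') := h2 T hT
  have nuy : ¬ adjGraph r n E (a T) (a t') := by
    intro h
    have := h2 t' ht'
    rw [ht'1] at this
    exact this (Stmt12Aux.adj_symm h)
  exact Stmt12Aux.key r n p q E hEr hpq himin2 hq hn (a T) (a s') (a t')
    (hrange T hT) (hrange s' hs') (hrange t' ht')
    (h1 T hT s' hs' hTs') (h1 T hT t' ht' hTt') nux nuy
    (hTmin s' (Finset.mem_range.mpr hs')) (hTmin t' (Finset.mem_range.mpr ht'))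
    hadjxy
end

section
/- With G_n as in the context: let p = max{j : (i,j) ∈ E}, so that for every n ≥ r the largest vertex occurring in an edge of G_n equals n − r + p. Assume the quasi-saturation condition: for every n ≥ r, every edge {a,b} of G_{n+1} with a ≤ n − r + p and b ≤ n − r + p is also an edge of G_n. Then G_n is cochordal for every n ≥ r. (By Fröberg's theorem, this is the statement that a quasi-saturated Inc-invariant chain of eventually nonzero edge ideals with stability index r satisfies reg I_n = 2 for all n ≥ r.) -/
/-- Symmetry of the adjacency relation. -/
lemma adjGraph_symm {r n : ℤ} {E : Set (ℤ × ℤ)} {u v : ℤ}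
    (h : adjGraph r n E u v) : adjGraph r n E v u := Or.symm h

/-- Both endpoints of an edge of `G_n` are at most `n - r + p`. -/
lemma adj_le {r n p : ℤ} {E : Set (ℤ × ℤ)} (hp2 : ∀ e ∈ E, e.2 ≤ p)
    {u v : ℤ} (h : adjGraph r n E u v) : u ≤ n - r + p ∧ v ≤ n - r + p := by
  rcases h with ⟨hlt, e, he, h1, h2, h3⟩ | ⟨hlt, e, he, h1, h2, h3⟩ <;>
    have := hp2 e he <;> omega

/-- One step of vertical closure, extracted from quasi-saturation at `n = r`. -/
lemma vstep {r p : ℤ} {E : Set (ℤ × ℤ)}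
    (hEr : ∀ e ∈ E, 1 ≤ e.1 ∧ e.1 < e.2 ∧ e.2 ≤ r)
    (hp2 : ∀ e ∈ E, e.2 ≤ p)
    (hqsat : ∀ n : ℤ, r ≤ n → ∀ a b : ℤ, a ≤ n - r + p → b ≤ n - r + p →
      adjGraph r (n + 1) E a b → adjGraph r n E a b) :
    ∀ i j : ℤ, (i, j) ∈ E → j < p → (i, j + 1) ∈ E := by
  intro i j hij hjp
  obtain ⟨hi1, hilt, hjr⟩ := hEr _ hij
  simp only at hi1 hilt hjr
  have hedge : adjGraph r (r + 1) E i (j + 1) :=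
    Or.inl ⟨by omega, ⟨(i, j), hij, le_rfl,
      show i - i ≤ (j + 1) - j by omega,
      show (j + 1) - j ≤ (r + 1) - r by omega⟩⟩
  have h := hqsat r le_rfl i (j + 1) (by omega) (by omega) hedge
  rcases h with ⟨hlt, e, he, h1, h2, h3⟩ | ⟨hlt, e, he, h1, h2, h3⟩
  · have heq : e = (i, j + 1) := by
      obtain ⟨he1, he2, he3⟩ := hEr e he
      have : e.1 = i ∧ e.2 = j + 1 := by omega
      exact Prod.ext this.1 this.2
    rwa [heq] at he
  · omega

/-- Iterated vertical closure. -/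
lemma vclosure {r p : ℤ} {E : Set (ℤ × ℤ)}
    (hEr : ∀ e ∈ E, 1 ≤ e.1 ∧ e.1 < e.2 ∧ e.2 ≤ r)
    (hp2 : ∀ e ∈ E, e.2 ≤ p)
    (hqsat : ∀ n : ℤ, r ≤ n → ∀ a b : ℤ, a ≤ n - r + p → b ≤ n - r + p →
      adjGraph r (n + 1) E a b → adjGraph r n E a b) :
    ∀ k : ℕ, ∀ i j : ℤ, (i, j) ∈ E → j + (k : ℤ) ≤ p → (i, j + (k : ℤ)) ∈ E := by
  intro k
  induction k with
  | zero => intro i j h _; simpa using h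
  | succ k ih =>
      intro i j h hk
      push_cast at hk ⊢
      have h1 : (i, j + (k : ℤ)) ∈ E := ih i j h (by omega)
      have h2 := vstep hEr hp2 hqsat i (j + (k : ℤ)) h1 (by omega)
      convert h2 using 2
      ring

/-- Vertical closure to any level `≤ p`. -/
lemma vmax {r p : ℤ} {E : Set (ℤ × ℤ)}
    (hEr : ∀ e ∈ E, 1 ≤ e.1 ∧ e.1 < e.2 ∧ e.2 ≤ r)
    (hp2 : ∀ e ∈ E, e.2 ≤ p)
    (hqsat : ∀ n : ℤ, r ≤ n → ∀ a b : ℤ, a ≤ n - r + p → b ≤ n - r + p →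
      adjGraph r (n + 1) E a b → adjGraph r n E a b) :
    ∀ i j j' : ℤ, (i, j) ∈ E → j ≤ j' → j' ≤ p → (i, j') ∈ E := by
  intro i j j' h hle hle'
  have := vclosure hEr hp2 hqsat (j' - j).toNat i j h
    (by rw [Int.toNat_of_nonneg (by omega)]; omega)
  rwa [Int.toNat_of_nonneg (by omega), show j + (j' - j) = j' by ring] at this

/-- Upward closedness of adjacency in the larger endpoint. -/
lemma adj_up {r n p : ℤ} {E : Set (ℤ × ℤ)}
    (hEr : ∀ e ∈ E, 1 ≤ e.1 ∧ e.1 < e.2 ∧ e.2 ≤ r)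
    (hp2 : ∀ e ∈ E, e.2 ≤ p)
    (hqsat : ∀ n : ℤ, r ≤ n → ∀ a b : ℤ, a ≤ n - r + p → b ≤ n - r + p →
      adjGraph r (n + 1) E a b → adjGraph r n E a b)
    {u v₁ v₂ : ℤ} (huv : u < v₁) (h12 : v₁ ≤ v₂) (h2 : v₂ ≤ n - r + p)
    (h : adjGraph r n E u v₁) : adjGraph r n E u v₂ := by
  rcases h with ⟨hlt, e, he, he1, he2, he3⟩ | ⟨hlt, _⟩
  · have hep : e.2 ≤ p := hp2 e he
    have heE : (e.1, e.2) ∈ E := he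
    rcases le_total (v₂ - n + r) e.2 with hc | hc
    · exact Or.inl ⟨by omega, ⟨(e.1, e.2), heE, show e.1 ≤ u from he1,
        show u - e.1 ≤ v₂ - e.2 by omega, show v₂ - e.2 ≤ n - r by omega⟩⟩
    · have hmem : (e.1, v₂ - n + r) ∈ E :=
        vmax hEr hp2 hqsat e.1 e.2 (v₂ - n + r) heE (by omega) (by omega)
      exact Or.inl ⟨by omega, ⟨(e.1, v₂ - n + r), hmem, show e.1 ≤ u from he1,
        show u - e.1 ≤ v₂ - (v₂ - n + r) by omega,
        show v₂ - (v₂ - n + r) ≤ n - r by omega⟩⟩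
  · omega

/-- let `p = max{j : (i,j) ∈ E}`.  If the chain is
quasi-saturated, i.e. every edge `{a,b}` of `G_{n+1}` with both endpoints
`≤ n - r + p` is already an edge of `G_n` (for every `n ≥ r`), then `G_n` is
cochordal for every `n ≥ r`. -/
theorem stmt13 (r : ℤ) (hr : 1 ≤ r) (E : Set (ℤ × ℤ)) (hE : E.Nonempty)
    (hEr : ∀ e ∈ E, 1 ≤ e.1 ∧ e.1 < e.2 ∧ e.2 ≤ r)
    (p : ℤ) (hp1 : ∃ e ∈ E, e.2 = p) (hp2 : ∀ e ∈ E, e.2 ≤ p)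
    (hqsat : ∀ n : ℤ, r ≤ n → ∀ a b : ℤ, a ≤ n - r + p → b ≤ n - r + p →
      adjGraph r (n + 1) E a b → adjGraph r n E a b)
    (n : ℤ) (hn : r ≤ n) :
    Cochordal (adjGraph r n E) := by
  intro m hm a hanti
  obtain ⟨hinj, hcons, hadj⟩ := hanti
  -- an index attaining the maximum value
  obtain ⟨s, hs, hmax⟩ := Finset.exists_max_image (Finset.range m) a
    ⟨0, Finset.mem_range.mpr (by omega)⟩
  rw [Finset.mem_range] at hs
  have hmax' : ∀ t, t < m → a t ≤ a s := fun t ht =>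
    hmax t (Finset.mem_range.mpr ht)
  -- deterministic mod-m arithmetic
  have hshift : ∀ x y : ℕ, ((s + x) % m + y) % m = (s + (x + y)) % m := by
    intro x y
    have h1 : ((s + x) % m + y) % m = (s + x + y) % m :=
      (Nat.mod_modEq (s + x) m).add_right y
    rw [h1, Nat.add_assoc]
  have hcancel : ∀ x y : ℕ, x < m → y < m →
      (s + x) % m = (s + y) % m → x = y := by
    intro x y hx hy h
    have h' : Nat.ModEq m (s + x) (s + y) := h
    have h2 : x % m = y % m := Nat.ModEq.add_left_cancel' s h'
    rwa [Nat.mod_eq_of_lt hx, Nat.mod_eq_of_lt hy] at h2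
  have h0 : (s + 0) % m = s := by rw [Nat.add_zero, Nat.mod_eq_of_lt hs]
  have hsp_lt : (s + 1) % m < m := Nat.mod_lt _ (by omega)
  have hsm_lt : (s + (m - 1)) % m < m := Nat.mod_lt _ (by omega)
  have hs2_lt : (s + 2) % m < m := Nat.mod_lt _ (by omega)
  have hsm1 : ((s + (m - 1)) % m + 1) % m = s := by
    rw [hshift, show m - 1 + 1 = m from by omega, Nat.add_mod_right,
      Nat.mod_eq_of_lt hs]
  have hsp_ne_s : (s + 1) % m ≠ s := by
    intro h
    have := hcancel 1 0 (by omega) (by omega) (h.trans h0.symm)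
    omega
  have hsm_ne_s : (s + (m - 1)) % m ≠ s := by
    intro h
    have := hcancel (m - 1) 0 (by omega) (by omega) (h.trans h0.symm)
    omega
  have hsp_ne_sm : (s + 1) % m ≠ (s + (m - 1)) % m := by
    intro h
    have := hcancel 1 (m - 1) (by omega) (by omega) h
    omega
  have t4 : ((s + 1) % m + 1) % m ≠ (s + (m - 1)) % m := by
    rw [hshift]
    intro h
    have := hcancel (1 + 1) (m - 1) (by omega) (by omega) h
    omega
  have t1 : s ≠ (s + 2) % m := by
    intro h
    have := hcancel 0 2 (by omega) (by omega) (h0.trans h)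
    omega
  have t2 : (s + 1) % m ≠ (s + 2) % m := by
    intro h
    have := hcancel 1 2 (by omega) (by omega) h
    omega
  have t3 : ((s + 2) % m + 1) % m ≠ s := by
    rw [hshift]
    intro h
    have := hcancel (2 + 1) 0 (by omega) (by omega) (h.trans h0.symm)
    omega
  -- `a s` is an endpoint of an edge, hence `a s ≤ n - r + p`
  have hAs2 : adjGraph r n E (a s) (a ((s + 2) % m)) :=
    hadj s hs ((s + 2) % m) hs2_lt t1 t2 t3
  have hs_le : a s ≤ n - r + p := (adj_le hp2 hAs2).1
  -- non-adjacency of the cyclic neighbours of the max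
  have hns_p : ¬ adjGraph r n E (a s) (a ((s + 1) % m)) := hcons s hs
  have hns_m : ¬ adjGraph r n E (a ((s + (m - 1)) % m)) (a s) := by
    have := hcons ((s + (m - 1)) % m) hsm_lt
    rwa [hsm1] at this
  -- the two neighbours of the max are adjacent
  have hA_pm : adjGraph r n E (a ((s + 1) % m)) (a ((s + (m - 1)) % m)) :=
    hadj ((s + 1) % m) hsp_lt ((s + (m - 1)) % m) hsm_lt hsp_ne_sm t4
      (by rw [hsm1]; exact Ne.symm hsp_ne_s)
  -- key claim: a vertex non-adjacent to the max is non-adjacent to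
  -- everything above it
  have claim : ∀ t u : ℕ, t < m → u < m →
      ¬ adjGraph r n E (a t) (a s) → a t < a u →
      ¬ adjGraph r n E (a t) (a u) := by
    intro t u ht hu hns hlt hAtu
    exact hns (adj_up hEr hp2 hqsat hlt (hmax' u hu) hs_le hAtu)
  have hne : a ((s + (m - 1)) % m) ≠ a ((s + 1) % m) :=
    hinj _ hsm_lt _ hsp_lt (Ne.symm hsp_ne_sm)
  rcases lt_or_gt_of_ne hne with h | h
  · exact claim _ _ hsm_lt hsp_lt hns_m h (adjGraph_symm hA_pm)
  · exact claim _ _ hsp_lt hsm_lt (fun hc => hns_p (adjGraph_symm hc)) h hA_pm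
end

section
/- With G_n as in the context, take r = 4 and E = {(1,3),(2,4)}. Then for every integer n ≥ 4: (a) two vertices u < v are adjacent in G_n if and only if v − u ≥ 2 and (u,v) ≠ (1,n); (b) the vertices 1, 2, …, n, in this cyclic order, form an induced anticycle of length n in G_n (equivalently, an induced cycle of length n in the complement G_n^c). In particular, G_n is not cochordal for any n ≥ 4. -/
/-- The edge set `E = {(1,3), (2,4)}` of Example 4.4. -/
def E14 : Set (ℤ × ℤ) := {(1, 3), (2, 4)}

lemma adj_symm (r n : ℤ) (E : Set (ℤ × ℤ)) (u v : ℤ) :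
    adjGraph r n E u v ↔ adjGraph r n E v u := by
  unfold adjGraph; exact or_comm

lemma adj_iff (n : ℤ) (hn : 4 ≤ n) (u v : ℤ) (hu : 1 ≤ u) (huv : u < v)
    (hv : v ≤ n) :
    adjGraph 4 n E14 u v ↔ (2 ≤ v - u ∧ ¬(u = 1 ∧ v = n)) := by
  constructor
  · rintro (⟨_, e, he, h1, h2, h3⟩ | ⟨h, _⟩)
    · rcases he with rfl | rfl <;> simp only [Prod.fst, Prod.snd] at h1 h2 h3 <;>
        exact ⟨by omega, by omega⟩
    · omega
  · rintro ⟨h2, hne⟩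
    left
    refine ⟨huv, ?_⟩
    by_cases h : u = 1
    · exact ⟨(1, 3), Or.inl rfl, by omega, by omega, by
        have : v ≠ n := fun hv' => hne ⟨h, hv'⟩
        omega⟩
    · exact ⟨(2, 4), Or.inr rfl, by omega, by omega, by omega⟩

lemma modsucc (n s : ℕ) (hs : s < n) :
    (s + 1) % n = if s + 1 = n then 0 else s + 1 := by
  split_ifs with h
  · rw [h, Nat.mod_self]
  · exact Nat.mod_eq_of_lt (by omega)

/-- for `r = 4`, `E = {(1,3),(2,4)}` and every `n ≥ 4`:
(a) vertices `u < v` of `G_n` are adjacent iff `v - u ≥ 2` and `(u,v) ≠ (1,n)`;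
(b) the vertices `1, 2, …, n` in this cyclic order form an induced anticycle
of length `n` in `G_n`; in particular `G_n` is not cochordal. -/
theorem stmt14 (n : ℕ) (hn : 4 ≤ n) :
    (∀ u v : ℤ, 1 ≤ u → u < v → v ≤ (n : ℤ) →
      (adjGraph 4 (n : ℤ) E14 u v ↔ (2 ≤ v - u ∧ ¬(u = 1 ∧ v = (n : ℤ))))) ∧
    IsInducedAnticycle (adjGraph 4 (n : ℤ) E14) n (fun t => (t : ℤ) + 1) ∧
    ¬ Cochordal (adjGraph 4 (n : ℤ) E14) := by
  have hn' : (4 : ℤ) ≤ (n : ℤ) := by exact_mod_cast hn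
  have key : ∀ u v : ℤ, 1 ≤ u → u < v → v ≤ (n : ℤ) →
      (adjGraph 4 (n : ℤ) E14 u v ↔ (2 ≤ v - u ∧ ¬(u = 1 ∧ v = (n : ℤ)))) :=
    fun u v hu huv hv => adj_iff _ hn' u v hu huv hv
  have hanti : IsInducedAnticycle (adjGraph 4 (n : ℤ) E14) n
      (fun t => (t : ℤ) + 1) := by
    refine ⟨?_, ?_, ?_⟩
    · intro s hs t ht hst
      simp only [ne_eq]
      omega
    · intro t ht
      by_cases h : t + 1 < n
      · have h1 : (t + 1) % n = t + 1 := Nat.mod_eq_of_lt h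
        rw [h1]
        intro hadj
        rw [key ((t : ℤ) + 1) ((t + 1 : ℕ) + 1) (by omega) (by push_cast; omega)
            (by push_cast; omega)] at hadj
        push_cast at hadj
        omega
      · have ht1 : t + 1 = n := by omega
        have h1 : (t + 1) % n = 0 := by rw [ht1, Nat.mod_self]
        rw [h1]
        intro hadj
        rw [adj_symm] at hadj
        rw [key ((0 : ℕ) + 1) ((t : ℤ) + 1) (by norm_num) (by push_cast; omega)
            (by push_cast; omega)] at hadj
        refine hadj.2 ⟨by norm_num, ?_⟩
        push_cast
        omega
    · intro s hs t ht hst h1 h2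
      have e1 : (s + 1) % n = if s + 1 = n then 0 else s + 1 := modsucc n s hs
      have e2 : (t + 1) % n = if t + 1 = n then 0 else t + 1 := modsucc n t ht
      have f1 : (s + 1 = n ∧ t ≠ 0) ∨ (s + 1 < n ∧ s + 1 ≠ t) := by
        rcases eq_or_ne (s + 1) n with c | c
        · left; refine ⟨c, fun h0 => h1 ?_⟩; rw [e1, if_pos c, h0]
        · right; refine ⟨by omega, fun h0 => h1 ?_⟩; rw [e1, if_neg c]; exact h0
      have f2 : (t + 1 = n ∧ s ≠ 0) ∨ (t + 1 < n ∧ t + 1 ≠ s) := by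
        rcases eq_or_ne (t + 1) n with c | c
        · left; refine ⟨c, fun h0 => h2 ?_⟩; rw [e2, if_pos c, h0]
        · right; refine ⟨by omega, fun h0 => h2 ?_⟩; rw [e2, if_neg c]; exact h0
      rcases lt_or_gt_of_ne hst with hlt | hlt
      · -- s < t
        have hst2 : s + 2 ≤ t := by omega
        have hnot : ¬(s = 0 ∧ t = n - 1) := by omega
        rw [key ((s : ℤ) + 1) ((t : ℤ) + 1) (by omega) (by push_cast; omega)
            (by push_cast; omega)]
        constructor
        · push_cast; omega
        · rintro ⟨hs1, ht1⟩
          apply hnot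
          constructor <;> omega
      · have hst2 : t + 2 ≤ s := by omega
        have hnot : ¬(t = 0 ∧ s = n - 1) := by omega
        rw [adj_symm]
        rw [key ((t : ℤ) + 1) ((s : ℤ) + 1) (by omega) (by push_cast; omega)
            (by push_cast; omega)]
        constructor
        · push_cast; omega
        · rintro ⟨hs1, ht1⟩
          apply hnot
          constructor <;> omega
  exact ⟨key, hanti, fun h => h n hn _ hanti⟩
end

section
/- With G_n as in the context, take r = 4 and E = {(1,3),(2,4)}. Then for every integer n ≥ 9, the graph G_n contains no induced 2K_2; that is, indmatch(G_n) = 1 for all n ≥ 9. -/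
/-- The induced matching number. -/
noncomputable def indmatch (A : ℤ → ℤ → Prop) : ℕ :=
  sSup {k : ℕ | HasInducedKK2 A k}

/-- The edge set `E = {(1,3), (2,4)}` of Example 4.4. -/
def E15 : Set (ℤ × ℤ) := {(1, 3), (2, 4)}

lemma mem15 (e : ℤ × ℤ) : e ∈ E15 ↔ e = (1,3) ∨ e = (2,4) := by
  simp [E15]

lemma adj_iff_s15 (n x y : ℤ) : adjGraph 4 n E15 x y ↔
    (x < y ∧ ((1 ≤ x ∧ x - 1 ≤ y - 3 ∧ y - 3 ≤ n - 4) ∨ (2 ≤ x ∧ x - 2 ≤ y - 4 ∧ y - 4 ≤ n - 4))) ∨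
    (y < x ∧ ((1 ≤ y ∧ y - 1 ≤ x - 3 ∧ x - 3 ≤ n - 4) ∨ (2 ≤ y ∧ y - 2 ≤ x - 4 ∧ x - 4 ≤ n - 4))) := by
  constructor
  · rintro (⟨h, e, he, h1, h2, h3⟩ | ⟨h, e, he, h1, h2, h3⟩) <;>
      rw [mem15] at he <;> rcases he with rfl | rfl <;> dsimp only at h1 h2 h3 <;> omega
  · rintro (⟨h, (h1|h1)⟩ | ⟨h, (h1|h1)⟩)
    exacts [Or.inl ⟨h, (1,3), (mem15 _).2 (Or.inl rfl), h1⟩,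
      Or.inl ⟨h, (2,4), (mem15 _).2 (Or.inr rfl), h1⟩,
      Or.inr ⟨h, (1,3), (mem15 _).2 (Or.inl rfl), h1⟩,
      Or.inr ⟨h, (2,4), (mem15 _).2 (Or.inr rfl), h1⟩]

/-- Normalized edge predicate for an ordered pair. -/
def Pn (n x y : ℤ) : Prop := 1 ≤ x ∧ x + 2 ≤ y ∧ y ≤ n ∧ (y = n → 2 ≤ x)

lemma adj_iff2 (n x y : ℤ) : adjGraph 4 n E15 x y ↔
    (x < y ∧ Pn n x y) ∨ (y < x ∧ Pn n y x) := by
  rw [adj_iff_s15]; unfold Pn; omega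

lemma adj_symm_s15 {n x y : ℤ} (h : adjGraph 4 n E15 x y) : adjGraph 4 n E15 y x :=
  Or.symm h

lemma adj_of_Pn {n x y : ℤ} (h : Pn n x y) : adjGraph 4 n E15 x y := by
  rw [adj_iff2]
  exact Or.inl ⟨by have := h.2.1; omega, h⟩

/-- Key combinatorial lemma: two disjoint edges whose left endpoints satisfy
`a < c` always admit a cross adjacency. -/
lemma key (n a b c d : ℤ) (hn : 9 ≤ n) (hab : Pn n a b) (hcd : Pn n c d)
    (hac : a < c) (_hbc : b ≠ c) (_hbd : b ≠ d) :
    Pn n a c ∨ Pn n a d ∨ Pn n c b ∨ Pn n b d := by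
  unfold Pn at *
  omega

lemma cross (n a b c d : ℤ) (hn : 9 ≤ n) (hab : Pn n a b) (hcd : Pn n c d)
    (h1 : ¬ adjGraph 4 n E15 a c) (h2 : ¬ adjGraph 4 n E15 a d)
    (h3 : ¬ adjGraph 4 n E15 b c) (h4 : ¬ adjGraph 4 n E15 b d)
    (dac : a ≠ c) (dad : a ≠ d) (dbc : b ≠ c) (dbd : b ≠ d) : False := by
  rcases lt_trichotomy a c with h | h | h
  · rcases key n a b c d hn hab hcd h dbc dbd with hp | hp | hp | hp
    exacts [h1 (adj_of_Pn hp), h2 (adj_of_Pn hp), h3 (adj_symm_s15 (adj_of_Pn hp)),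
      h4 (adj_of_Pn hp)]
  · exact dac h
  · rcases key n c d a b hn hcd hab h (Ne.symm dad) (Ne.symm dbd) with hp | hp | hp | hp
    exacts [h1 (adj_symm_s15 (adj_of_Pn hp)), h3 (adj_symm_s15 (adj_of_Pn hp)),
      h2 (adj_of_Pn hp), h4 (adj_symm_s15 (adj_of_Pn hp))]

lemma no2 (n : ℤ) (hn : 9 ≤ n) : ¬ HasInducedKK2 (adjGraph 4 n E15) 2 := by
  rintro ⟨u, v, hd, he, hni⟩
  have e0 := he 0 (by norm_num)
  have e1 := he 1 (by norm_num)
  have d01 := hd 0 (by norm_num) 1 (by norm_num)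
  have d10 := hd 1 (by norm_num) 0 (by norm_num)
  obtain ⟨hded, duv⟩ := d01
  obtain ⟨duu, dvv⟩ := hded (by norm_num)
  have dvu : v 0 ≠ u 1 := Ne.symm d10.2
  have n01 := hni 0 (by norm_num) 1 (by norm_num) (by norm_num)
  have n10 := hni 1 (by norm_num) 0 (by norm_num) (by norm_num)
  obtain ⟨nuu, nuv, nvv⟩ := n01
  obtain ⟨_, nvu', _⟩ := n10
  have nvu : ¬ adjGraph 4 n E15 (v 0) (u 1) := fun h => nvu' (adj_symm_s15 h)
  rw [adj_iff2] at e0 e1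
  rcases e0 with ⟨_, hP0⟩ | ⟨_, hP0⟩ <;> rcases e1 with ⟨_, hP1⟩ | ⟨_, hP1⟩
  · exact cross n (u 0) (v 0) (u 1) (v 1) hn hP0 hP1 nuu nuv nvu nvv duu duv dvu dvv
  · exact cross n (u 0) (v 0) (v 1) (u 1) hn hP0 hP1 nuv nuu nvv nvu duv duu dvv dvu
  · exact cross n (v 0) (u 0) (u 1) (v 1) hn hP0 hP1 nvu nvv nuu nuv dvu dvv duu duv
  · exact cross n (v 0) (u 0) (v 1) (u 1) hn hP0 hP1 nvv nvu nuv nuu dvv dvu duv duu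

/-- for `r = 4`, `E = {(1,3),(2,4)}` and every `n ≥ 9`, the
graph `G_n` has no induced `2K₂`; that is, `indmatch (G_n) = 1`. -/
theorem stmt15 (n : ℤ) (hn : 9 ≤ n) :
    ¬ HasInducedKK2 (adjGraph 4 n E15) 2 ∧ indmatch (adjGraph 4 n E15) = 1 := by
  refine ⟨no2 n hn, ?_⟩
  have h1 : HasInducedKK2 (adjGraph 4 n E15) 1 := by
    refine ⟨fun _ => 1, fun _ => 3, ?_, ?_, ?_⟩
    · intro s hs t ht
      exact ⟨fun hst => absurd (show s = t by omega) hst, by norm_num⟩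
    · intro t ht
      show adjGraph 4 n E15 1 3
      exact adj_of_Pn ⟨by norm_num, by norm_num, by omega, by omega⟩
    · intro s hs t ht hst; omega
  have hle : ∀ k ∈ {k : ℕ | HasInducedKK2 (adjGraph 4 n E15) k}, k ≤ 1 := by
    intro k hk
    by_contra h
    push_neg at h
    obtain ⟨u, v, hd, he, hni⟩ := hk
    exact no2 n hn ⟨u, v, fun s hs t ht => hd s (by omega) t (by omega),
      fun t ht => he t (by omega), fun s hs t ht hst => hni s (by omega) t (by omega) hst⟩
  exact IsGreatest.csSup_eq ⟨h1, hle⟩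
end

section
/- With G_n as in the context, let r ≥ 5 be an integer and take E = {(1,r),(r−3,r−1)} (note 3r − 10 ≥ r). Then in the graph G_{3r−10}, the four vertices r−4, 2r−8, 2r−6, 3r−10 are pairwise distinct and form an induced 2K_2 whose two edges are {2r−8, 2r−6} and {r−4, 3r−10}. In particular, G_{3r−10} contains an induced 2K_2. -/
/-- The edge set `E = {(1,r), (r-3,r-1)}` of Remark 6.3. -/
def E16 (r : ℤ) : Set (ℤ × ℤ) := {(1, r), (r - 3, r - 1)}

lemma adj16_iff (r n u v : ℤ) : adjGraph r n (E16 r) u v ↔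
    (u < v ∧ ((1 ≤ u ∧ u - 1 ≤ v - r ∧ v - r ≤ n - r) ∨
      (r - 3 ≤ u ∧ u - (r - 3) ≤ v - (r - 1) ∧ v - (r - 1) ≤ n - r))) ∨
    (v < u ∧ ((1 ≤ v ∧ v - 1 ≤ u - r ∧ u - r ≤ n - r) ∨
      (r - 3 ≤ v ∧ v - (r - 3) ≤ u - (r - 1) ∧ u - (r - 1) ≤ n - r))) := by
  simp only [adjGraph, E16, Set.mem_insert_iff, Set.mem_singleton_iff]
  constructor
  · rintro (⟨h, e, (rfl | rfl), he⟩ | ⟨h, e, (rfl | rfl), he⟩) <;>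
      simp_all
  · rintro (⟨h, (h1 | h1)⟩ | ⟨h, (h1 | h1)⟩)
    · exact Or.inl ⟨h, (1, r), Or.inl rfl, h1⟩
    · exact Or.inl ⟨h, (r - 3, r - 1), Or.inr rfl, h1⟩
    · exact Or.inr ⟨h, (1, r), Or.inl rfl, h1⟩
    · exact Or.inr ⟨h, (r - 3, r - 1), Or.inr rfl, h1⟩

/-- for `r ≥ 5` and `E = {(1,r),(r-3,r-1)}`, the four vertices
`r-4, 2r-8, 2r-6, 3r-10` of `G_{3r-10}` are pairwise distinct and form an
induced `2K₂` with edges `{2r-8, 2r-6}` and `{r-4, 3r-10}`; in particular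
`G_{3r-10}` contains an induced `2K₂`. -/
theorem stmt16 (r : ℤ) (hr : 5 ≤ r) :
    ([r - 4, 2 * r - 8, 2 * r - 6, 3 * r - 10] : List ℤ).Pairwise (· ≠ ·) ∧
    adjGraph r (3 * r - 10) (E16 r) (2 * r - 8) (2 * r - 6) ∧
    adjGraph r (3 * r - 10) (E16 r) (r - 4) (3 * r - 10) ∧
    ¬ adjGraph r (3 * r - 10) (E16 r) (2 * r - 8) (r - 4) ∧
    ¬ adjGraph r (3 * r - 10) (E16 r) (2 * r - 8) (3 * r - 10) ∧
    ¬ adjGraph r (3 * r - 10) (E16 r) (2 * r - 6) (r - 4) ∧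
    ¬ adjGraph r (3 * r - 10) (E16 r) (2 * r - 6) (3 * r - 10) ∧
    HasInducedKK2 (adjGraph r (3 * r - 10) (E16 r)) 2 := by
  have hA : ∀ u v : ℤ, adjGraph r (3 * r - 10) (E16 r) u v ↔ _ :=
    fun u v => adj16_iff r (3 * r - 10) u v
  refine ⟨?_, ?_, ?_, ?_, ?_, ?_, ?_, ?_⟩
  · refine List.Pairwise.cons ?_ (List.Pairwise.cons ?_ (List.Pairwise.cons ?_
      (List.Pairwise.cons (fun a ha => absurd ha List.not_mem_nil) List.Pairwise.nil))) <;> (intro a ha; simp at ha; omega)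
  · rw [hA]; omega
  · rw [hA]; omega
  · rw [hA]; omega
  · rw [hA]; omega
  · rw [hA]; omega
  · rw [hA]; omega
  · refine ⟨fun t => if t = 0 then 2 * r - 8 else r - 4,
      fun t => if t = 0 then 2 * r - 6 else 3 * r - 10, ?_, ?_, ?_⟩
    · intro s hs t ht
      interval_cases s <;> interval_cases t <;> simp <;> omega
    · intro t ht
      interval_cases t <;> simp <;> rw [hA] <;> omega
    · intro s hs t ht hst
      interval_cases s <;> interval_cases t <;> simp_all <;> omega
end
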